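/- arXiv:2005.03308 — 9 statements merged into one kernel-verified Lean document; each statement's English description precedes it below -/
import Mathlib

section
/- Let Γ be a countable subgroup of SL(2,ℝ)×SL(2,ℝ) and let A, α, ε > 0 be such that N_Γ(x,R) < A·e^{αR} for every x ∈ SL(2,ℝ) and R > 0. Fix an integer k ≥ 1 and b = (b₀,…,b_{k−1}) ∈ ℝ^k with b ≠ 0, set ψ_{m,b} := Σ_{j=0}^{k−1} b_j ψ_{m,3^j} and f_b(u) := Σ_{j=0}^{k−1} b_j cos(3^j θ_{a(b),3}) u^{3^j}. Then for every integer m with 2m > m(3^{k−1}A, α, ε, 3^{k−1}) and every x ∈ SL(2,ℝ) with ‖x‖ ≤ 4ε, the family (|ψ_{m,b}(γ₁⁻¹ x γ₂)|)_{γ ∈ Γ, ‖γ₁⁻¹ x γ₂‖ > 4ε} is summable and Σ_{γ=(γ₁,γ₂) ∈ Γ, ‖γ₁⁻¹ x γ₂‖ > 4ε} |ψ_{m,b}(γ₁⁻¹ x γ₂)| < (cosh ε)^{−2m} · f_b(tanh ε). -/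
open Real

noncomputable section

abbrev SL2 := Matrix.SpecialLinearGroup (Fin 2) ℝ

/-- inverse hyperbolic cosine -/
def acosh (x : ℝ) : ℝ := Real.log (x + Real.sqrt (x ^ 2 - 1))

/-- the "pseudo-distance from the origin" ‖g‖ = arcosh((g₁₁²+g₁₂²+g₂₁²+g₂₂²)/2) -/
def gnorm (g : SL2) : ℝ :=
  acosh ((g.1 0 0 ^ 2 + g.1 0 1 ^ 2 + g.1 1 0 ^ 2 + g.1 1 1 ^ 2) / 2)

def z1 (x : SL2) : ℂ :=
  (((x.1 0 0 + x.1 1 1 : ℝ) : ℂ) + Complex.I * ((x.1 1 0 - x.1 0 1 : ℝ) : ℂ)) / 2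

def z2 (x : SL2) : ℂ :=
  (((x.1 0 1 + x.1 1 0 : ℝ) : ℂ) + Complex.I * ((x.1 0 0 - x.1 1 1 : ℝ) : ℂ)) / 2

/-- the spherical function ψ_{m,k}(x) = z₁(x)^{-(k+2m)} z₂(x)^k -/
def psi (m k : ℕ) (x : SL2) : ℂ := z1 x ^ (-(k + 2 * m : ℤ)) * z2 x ^ k

/-- γ is central iff both components are ±1 -/
def IsCentral (γ : SL2 × SL2) : Prop :=
  (γ.1.1 = 1 ∨ γ.1.1 = -1) ∧ (γ.2.1 = 1 ∨ γ.2.1 = -1)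

/-- ε_Γ -/
def epsGamma (Γ : Set (SL2 × SL2)) : ℝ :=
  (1 / 3) * sInf {r | ∃ γ ∈ Γ, ¬IsCentral γ ∧ r = |gnorm γ.1 - gnorm γ.2|}

/-- the set counted by N_Γ(x,R) -/
def orbitSet (Γ : Set (SL2 × SL2)) (x : SL2) (R : ℝ) : Set (SL2 × SL2) :=
  {γ | γ ∈ Γ ∧ gnorm (γ.1 * x * γ.2⁻¹) ≤ R}

/-- the constant m(C,α,ε,s) -/
def mConst (C α ε : ℝ) (s : ℕ) : ℝ :=
  (Real.log 2 * s + 2 * α * ε + Real.log (1 + 2 ^ s * C * Real.exp (6 * α * ε))) /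
    Real.log (Real.cosh ε)

def chi (x : ℝ) : ℝ := if x = 1 then 0 else 1

/-- θ_{a,N} for a tuple a of length k (with the convention a_{-1} = 1) -/
def thetaAN (a : ℕ → ℝ) (k : ℕ) (N : ℝ) : ℝ :=
  Real.pi * ∑ i ∈ Finset.range k,
    (chi (a i) - if i = 0 then 0 else chi (a (i - 1))) * N ^ (-(i : ℤ))

/-- the sign tuple a(b) attached to b -/
def signOf (b : ℕ → ℝ) (j : ℕ) : ℝ := if 0 ≤ b j then 1 else -1

/-- ψ_{m,b} = Σ_{j<k} b_j ψ_{m,3^j} -/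
def psiB (m k : ℕ) (b : ℕ → ℝ) (x : SL2) : ℂ :=
  ∑ j ∈ Finset.range k, (b j : ℂ) * psi m (3 ^ j) x

/-- f_b(u) = Σ_{j<k} b_j cos(3^j θ_{a(b),3}) u^{3^j} -/
def fb (k : ℕ) (b : ℕ → ℝ) (u : ℝ) : ℝ :=
  ∑ j ∈ Finset.range k, b j * Real.cos (3 ^ j * thetaAN (signOf b) k 3) * u ^ 3 ^ j

/-- the rotation matrix k(θ) -/
def kMat (θ : ℝ) : SL2 :=
  ⟨!![Real.cos θ, -Real.sin θ; Real.sin θ, Real.cos θ], by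
    simp [Matrix.det_fin_two_of]
    nlinarith [Real.sin_sq_add_cos_sq θ]⟩

/-- the diagonal matrix a(t) -/
def aMat (t : ℝ) : SL2 :=
  ⟨!![Real.exp t, 0; 0, Real.exp (-t)], by
    simp [Matrix.det_fin_two_of, ← Real.exp_add]⟩

end

/-!
Since `det y = 1`, `|z₁(y)| = cosh (‖y‖/2)` and `|z₂(y)| = sinh (‖y‖/2)`, so
`|ψ_{m,K}(y)| = tanh (‖y‖/2) ^ K / cosh (‖y‖/2) ^ (2m)`. Cut the far part of the orbit into the
layers `2(i+2)ε ≤ ‖γ₁⁻¹ x γ₂‖ < 2(i+3)ε`. The growth bound on `N_Γ` allows at most `A e^{2αε(i+3)}`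
points in layer `i`, each contributing at most `((i+3) tanh ε) ^ K cosh(ε) ^ (-2m(i+2))`; the
hypothesis on `m` makes these layer bounds decay geometrically, with total less than
`tanh(ε) ^ K cosh(ε) ^ (-2m) / 3^(k-1)` for `K ≤ 3^(k-1)`.

On the other side, `b_j cos (3^j θ_{a(b),3}) ≥ |b_j| / 3^(k-1)`: in `3^j θ / π` the digits up to
`j` contribute an integer of the parity of `χ(a_j)`, which gives the cosine the sign of `b_j`, and
the remaining digits contribute at most `(1 - 3^(j+1-k)) / 2` in absolute value.
-/

namespace Real

theorem tanh_le_tanh {x y : ℝ} (h : x ≤ y) : tanh x ≤ tanh y := by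
  have hmem (z : ℝ) : tanh z ∈ Set.Ioo (-1) 1 := ⟨neg_one_lt_tanh z, tanh_lt_one z⟩
  rwa [← artanh_le_artanh_iff (hmem x) (hmem y), artanh_tanh, artanh_tanh]

theorem tanh_nonneg {x : ℝ} (hx : 0 ≤ x) : 0 ≤ tanh x := by
  simpa using tanh_le_tanh hx

theorem tanh_pos {x : ℝ} (hx : 0 < x) : 0 < tanh x := by
  rw [tanh_eq_sinh_div_cosh]
  exact div_pos (sinh_pos_iff.2 hx) (cosh_pos x)

theorem cosh_mul_cosh_le_cosh_add {x y : ℝ} (hx : 0 ≤ x) (hy : 0 ≤ y) :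
    cosh x * cosh y ≤ cosh (x + y) := by
  rw [cosh_add]
  nlinarith [sinh_nonneg_iff.2 hx, sinh_nonneg_iff.2 hy]

theorem tanh_add_le {x y : ℝ} (hx : 0 ≤ x) (hy : 0 ≤ y) :
    tanh (x + y) ≤ tanh x + tanh y := by
  simp only [tanh_eq_sinh_div_cosh]
  calc sinh (x + y) / cosh (x + y) ≤ sinh (x + y) / (cosh x * cosh y) :=
        div_le_div_of_nonneg_left (sinh_nonneg_iff.2 (add_nonneg hx hy)) (by positivity)
          (cosh_mul_cosh_le_cosh_add hx hy)
    _ = sinh x / cosh x + sinh y / cosh y := by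
        rw [sinh_add]
        field_simp

theorem tanh_nat_mul_le {x : ℝ} (hx : 0 ≤ x) (n : ℕ) : tanh (n * x) ≤ n * tanh x := by
  induction n with
  | zero => simp
  | succ n ih =>
    push_cast
    calc tanh ((n + 1) * x) = tanh (n * x + x) := by ring_nf
      _ ≤ tanh (n * x) + tanh x := tanh_add_le (by positivity) hx
      _ ≤ (n + 1) * tanh x := by linarith

theorem cosh_pow_le_cosh_nat_mul {x : ℝ} (hx : 0 ≤ x) (n : ℕ) : cosh x ^ n ≤ cosh (n * x) := by
  induction n with
  | zero => simp
  | succ n ih =>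
    calc cosh x ^ (n + 1) = cosh x ^ n * cosh x := pow_succ _ _
      _ ≤ cosh (n * x) * cosh x := by gcongr
      _ ≤ cosh (n * x + x) := cosh_mul_cosh_le_cosh_add (by positivity) hx
      _ = cosh ((n + 1 : ℕ) * x) := by push_cast; ring_nf

theorem le_cos_pi_mul {δ t : ℝ} (hδ0 : 0 ≤ δ) (hδ1 : δ ≤ 1) (ht : |t| ≤ (1 - δ) / 2) :
    δ ≤ cos (π * t) := by
  have hπ := pi_pos
  have hle : |π * t| ≤ π / 2 - π * δ / 2 := by
    rw [abs_mul, abs_of_pos hπ]; nlinarith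
  calc δ = 2 / π * (π * δ / 2) := by field_simp
    _ ≤ sin (π * δ / 2) := mul_le_sin (by positivity) (by nlinarith)
    _ = cos (π / 2 - π * δ / 2) := (cos_pi_div_two_sub _).symm
    _ ≤ cos |π * t| := cos_le_cos_of_nonneg_of_le_pi (abs_nonneg _) (by nlinarith) hle
    _ = cos (π * t) := cos_abs _

end Real

theorem sl2_det_fin_two (y : SL2) : y.1 0 0 * y.1 1 1 - y.1 0 1 * y.1 1 0 = 1 := by
  rw [← Matrix.det_fin_two, y.2]

theorem one_le_half_sum_sq (y : SL2) :
    1 ≤ (y.1 0 0 ^ 2 + y.1 0 1 ^ 2 + y.1 1 0 ^ 2 + y.1 1 1 ^ 2) / 2 := by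
  nlinarith [sl2_det_fin_two y, sq_nonneg (y.1 0 0 - y.1 1 1), sq_nonneg (y.1 0 1 + y.1 1 0)]

theorem gnorm_nonneg (y : SL2) : 0 ≤ gnorm y :=
  Real.arcosh_nonneg (one_le_half_sum_sq y)

theorem norm_z1_sq (y : SL2) :
    ‖z1 y‖ ^ 2 = ((y.1 0 0 + y.1 1 1) ^ 2 + (y.1 1 0 - y.1 0 1) ^ 2) / 4 := by
  have : z1 y = ((y.1 0 0 + y.1 1 1) / 2 : ℝ) + ((y.1 1 0 - y.1 0 1) / 2 : ℝ) * Complex.I := by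
    simp only [z1]; push_cast; ring
  rw [this, Complex.sq_norm, Complex.normSq_add_mul_I]
  ring

theorem norm_z2_sq (y : SL2) :
    ‖z2 y‖ ^ 2 = ((y.1 0 1 + y.1 1 0) ^ 2 + (y.1 0 0 - y.1 1 1) ^ 2) / 4 := by
  have : z2 y = ((y.1 0 1 + y.1 1 0) / 2 : ℝ) + ((y.1 0 0 - y.1 1 1) / 2 : ℝ) * Complex.I := by
    simp only [z2]; push_cast; ring
  rw [this, Complex.sq_norm, Complex.normSq_add_mul_I]
  ring

theorem norm_z1_z2 (y : SL2) :
    ‖z1 y‖ = Real.cosh (gnorm y / 2) ∧ ‖z2 y‖ = Real.sinh (gnorm y / 2) := by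
  have hcosh : Real.cosh (gnorm y) = ‖z1 y‖ ^ 2 + ‖z2 y‖ ^ 2 := by
    rw [gnorm, acosh, ← Real.arcosh, Real.cosh_arcosh (one_le_half_sum_sq y), norm_z1_sq,
      norm_z2_sq]
    ring
  have hdiff : ‖z1 y‖ ^ 2 - ‖z2 y‖ ^ 2 = 1 := by
    rw [norm_z1_sq, norm_z2_sq]
    linear_combination sl2_det_fin_two y
  have hhalf :
      Real.cosh (gnorm y) = Real.cosh (gnorm y / 2) ^ 2 + Real.sinh (gnorm y / 2) ^ 2 := by
    rw [← Real.cosh_two_mul]; ring_nf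
  have hsq := Real.cosh_sq (gnorm y / 2)
  have hsinh : 0 ≤ Real.sinh (gnorm y / 2) := Real.sinh_nonneg_iff.2 (by linarith [gnorm_nonneg y])
  constructor
  · rw [← sq_eq_sq₀ (norm_nonneg _) (Real.cosh_pos _).le]; linarith
  · rw [← sq_eq_sq₀ (norm_nonneg _) hsinh]; linarith

theorem norm_psi (m K : ℕ) (y : SL2) :
    ‖psi m K y‖ = Real.tanh (gnorm y / 2) ^ K / Real.cosh (gnorm y / 2) ^ (2 * m) := by
  obtain ⟨h1, h2⟩ := norm_z1_z2 y
  have hexp : -((K : ℤ) + 2 * m) = -((K + 2 * m : ℕ) : ℤ) := by push_cast; ring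
  rw [psi, norm_mul, norm_zpow, norm_pow, h1, h2, hexp, zpow_neg, zpow_natCast,
    Real.tanh_eq_sinh_div_cosh, div_pow, pow_add]
  field_simp

def digitStep (c : ℕ → ℤ) (i : ℕ) : ℤ := c i - if i = 0 then 0 else c (i - 1)

section Digits

variable (c : ℕ → ℤ)

theorem sum_range_digitStep (j : ℕ) : ∑ i ∈ Finset.range (j + 1), digitStep c i = c j := by
  simpa [digitStep] using Finset.sum_range_sub (fun i => if i = 0 then 0 else c (i - 1)) (j + 1)

theorem two_dvd_sum_digitStep_mul_pow_sub {N : ℤ} (hN : Odd N) (j : ℕ) :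
    2 ∣ ∑ i ∈ Finset.range (j + 1), digitStep c i * N ^ (j - i) - c j := by
  rw [← sum_range_digitStep c j, ← Finset.sum_sub_distrib]
  refine Finset.dvd_sum fun i _ => ?_
  rw [← mul_sub_one]
  exact Dvd.dvd.mul_left (even_iff_two_dvd.1 (hN.pow.sub_odd odd_one)) _

variable {c}

theorem abs_digitStep_le_one (hc : ∀ i, c i = 0 ∨ c i = 1) (i : ℕ) : |digitStep c i| ≤ 1 := by
  rw [digitStep, abs_le]
  split_ifs <;> rcases hc i with h | h <;> rcases hc (i - 1) with h' | h' <;> omega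

theorem two_mul_sum_inv_pow_succ_le {N : ℝ} (hN : 3 ≤ N) (L : ℕ) :
    2 * ∑ l ∈ Finset.range L, (N ^ (l + 1))⁻¹ ≤ 1 - (N ^ L)⁻¹ := by
  induction L with
  | zero => simp
  | succ L ih =>
    have hstep : 3 * (N ^ (L + 1))⁻¹ ≤ (N ^ L)⁻¹ := by
      rw [pow_succ, mul_inv, mul_left_comm]
      exact mul_le_of_le_one_right (by positivity) (by rw [mul_inv_le_iff₀ (by linarith)]; linarith)
    rw [Finset.sum_range_succ]
    linarith

theorem abs_sum_Ico_digitStep_le (hc : ∀ i, c i = 0 ∨ c i = 1) {N : ℝ} (hN : 3 ≤ N)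
    (j k : ℕ) :
    |∑ i ∈ Finset.Ico (j + 1) k, (digitStep c i : ℝ) * N ^ ((j : ℤ) - i)|
      ≤ (1 - (N ^ (k - 1 - j))⁻¹) / 2 := by
  have hN0 : 0 < N := by linarith
  calc |∑ i ∈ Finset.Ico (j + 1) k, (digitStep c i : ℝ) * N ^ ((j : ℤ) - i)|
      ≤ ∑ i ∈ Finset.Ico (j + 1) k, N ^ ((j : ℤ) - i) := by
        refine (Finset.abs_sum_le_sum_abs _ _).trans (Finset.sum_le_sum fun i _ => ?_)
        rw [abs_mul, abs_of_pos (zpow_pos hN0 _)]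
        have : |(digitStep c i : ℝ)| ≤ 1 := by exact_mod_cast abs_digitStep_le_one hc i
        exact mul_le_of_le_one_left (zpow_pos hN0 _).le this
    _ = ∑ l ∈ Finset.range (k - 1 - j), (N ^ (l + 1))⁻¹ := by
        rw [Finset.sum_Ico_eq_sum_range, show k - (j + 1) = k - 1 - j by omega]
        refine Finset.sum_congr rfl fun l _ => ?_
        rw [← zpow_natCast, ← zpow_neg]
        congr 1
        push_cast
        ring
    _ ≤ (1 - (N ^ (k - 1 - j))⁻¹) / 2 := by linarith [two_mul_sum_inv_pow_succ_le hN (k - 1 - j)]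

theorem inv_pow_le_neg_one_zpow_mul_cos (hc : ∀ i, c i = 0 ∨ c i = 1) {N : ℕ} (hN : Odd N)
    (hN3 : 3 ≤ N) {j k : ℕ} (hj : j < k) :
    ((N : ℝ) ^ (k - 1))⁻¹ ≤ (-1) ^ c j *
      Real.cos (π * ∑ i ∈ Finset.range k, (digitStep c i : ℝ) * (N : ℝ) ^ ((j : ℤ) - i)) := by
  have hN3' : (3 : ℝ) ≤ N := by exact_mod_cast hN3
  set P : ℤ := ∑ i ∈ Finset.range (j + 1), digitStep c i * (N : ℤ) ^ (j - i)
  set t : ℝ := ∑ i ∈ Finset.Ico (j + 1) k, (digitStep c i : ℝ) * (N : ℝ) ^ ((j : ℤ) - i)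
  have hsplit : ∑ i ∈ Finset.range k, (digitStep c i : ℝ) * (N : ℝ) ^ ((j : ℤ) - i) = P + t := by
    rw [← Finset.sum_range_add_sum_Ico _ hj]
    congr 1
    push_cast [P]
    refine Finset.sum_congr rfl fun i hi => ?_
    rw [← zpow_natCast, Nat.cast_sub (Nat.lt_succ_iff.1 (Finset.mem_range.1 hi))]
  obtain ⟨q, hq⟩ := two_dvd_sum_digitStep_mul_pow_sub c (hN.natCast (R := ℤ)) j
  have hsign : (-1 : ℝ) ^ P = (-1) ^ c j := by
    rw [show P = c j + 2 * q by omega, zpow_add₀ (by norm_num), zpow_mul]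
    norm_num
  have hcos : Real.cos (π * (P + t)) = (-1) ^ c j * Real.cos (π * t) := by
    rw [show π * (P + t) = π * t + P * π by ring, Real.cos_add_int_mul_pi, hsign]
  have hδ : ((N : ℝ) ^ (k - 1))⁻¹ ≤ ((N : ℝ) ^ (k - 1 - j))⁻¹ :=
    inv_anti₀ (by positivity) (pow_le_pow_right₀ (by linarith) (by omega))
  have hcos_t : ((N : ℝ) ^ (k - 1 - j))⁻¹ ≤ Real.cos (π * t) :=
    Real.le_cos_pi_mul (by positivity) (inv_le_one_of_one_le₀ (one_le_pow₀ (by linarith)))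
      (abs_sum_Ico_digitStep_le hc hN3' j k)
  have hsq : ((-1 : ℝ) ^ c j) * (-1) ^ c j = 1 := by
    rw [← zpow_add₀ (by norm_num), ← two_mul, zpow_mul]; norm_num
  rw [hsplit, hcos, ← mul_assoc, hsq, one_mul]
  exact hδ.trans hcos_t

end Digits

theorem thetaAN_eq_pi_mul_sum (a : ℕ → ℝ) (k : ℕ) (N : ℝ) :
    thetaAN a k N = π * ∑ i ∈ Finset.range k,
      (digitStep (fun i => if a i = 1 then 0 else 1) i : ℝ) * N ^ (-(i : ℤ)) := by
  unfold thetaAN digitStep chi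
  congr 1
  refine Finset.sum_congr rfl fun i _ => ?_
  push_cast
  split_ifs <;> norm_num

theorem abs_div_pow_le_mul_cos_thetaAN (b : ℕ → ℝ) {N : ℕ} (hN : Odd N) (hN3 : 3 ≤ N)
    {j k : ℕ} (hj : j < k) :
    |b j| / (N : ℝ) ^ (k - 1) ≤ b j * Real.cos ((N : ℝ) ^ j * thetaAN (signOf b) k N) := by
  set c : ℕ → ℤ := fun i => if signOf b i = 1 then 0 else 1
  have hc (i : ℕ) : c i = 0 ∨ c i = 1 := by simp only [c]; split_ifs <;> simp
  have hb : b j = |b j| * (-1) ^ c j := by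
    by_cases h : 0 ≤ b j
    · simp [c, signOf, h, abs_of_nonneg h]
    · norm_num [c, signOf, h, abs_of_neg (not_le.1 h)]
  have hN0 : (N : ℝ) ≠ 0 := by positivity
  have hθ : (N : ℝ) ^ j * thetaAN (signOf b) k N =
      π * ∑ i ∈ Finset.range k, (digitStep c i : ℝ) * (N : ℝ) ^ ((j : ℤ) - i) := by
    rw [thetaAN_eq_pi_mul_sum, mul_left_comm, Finset.mul_sum]
    congr 1
    refine Finset.sum_congr rfl fun i _ => ?_
    rw [mul_left_comm, ← zpow_natCast, ← zpow_add₀ hN0, ← sub_eq_add_neg]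
  rw [hθ, div_eq_mul_inv]
  conv_rhs => rw [hb, mul_assoc]
  exact mul_le_mul_of_nonneg_left (inv_pow_le_neg_one_zpow_mul_cos hc hN hN3 hj) (abs_nonneg _)

theorem summable_and_tsum_le_of_sum_fiber_le {ι : Type*} {f : ι → ℝ} {g : ℕ → ℝ} (L : ι → ℕ)
    (hf : 0 ≤ f) (hg : Summable g)
    (hfg : ∀ (u : Finset ι) (n : ℕ), ∑ i ∈ u with L i = n, f i ≤ g n) :
    Summable f ∧ ∑' i, f i ≤ ∑' n, g n := by
  classical
  have hg0 : 0 ≤ g := fun n => by simpa using hfg ∅ n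
  have hsum (u : Finset ι) : ∑ i ∈ u, f i ≤ ∑' n, g n :=
    calc ∑ i ∈ u, f i = ∑ n ∈ u.image L, ∑ i ∈ u with L i = n, f i :=
          (Finset.sum_fiberwise_of_maps_to (fun i hi => Finset.mem_image_of_mem L hi) f).symm
      _ ≤ ∑ n ∈ u.image L, g n := Finset.sum_le_sum fun n _ => hfg u n
      _ ≤ ∑' n, g n := hg.sum_le_tsum _ fun n _ => hg0 n
  exact ⟨summable_of_sum_le hf hsum, tsum_le_of_sum_le hf hsum⟩

theorem nat_floor_sub_two_add_two_le_and_lt {x : ℝ} (hx : 2 < x) :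
    ((⌊x⌋₊ - 2 : ℕ) + 2 : ℝ) ≤ x ∧ x < (⌊x⌋₊ - 2 : ℕ) + 3 := by
  have h2 : 2 ≤ ⌊x⌋₊ := Nat.le_floor (by norm_num; linarith)
  rw [Nat.cast_sub h2]
  push_cast
  constructor
  · linarith [Nat.floor_le (by linarith : 0 ≤ x)]
  · linarith [Nat.lt_floor_add_one x]

theorem tanh_pow_div_cosh_pow_le {ε x : ℝ} (hε : 0 ≤ ε) {n : ℕ} (hlo : n * ε ≤ x)
    (hhi : x ≤ (n + 1) * ε) (K m : ℕ) :
    Real.tanh x ^ K / Real.cosh x ^ (2 * m)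
      ≤ ((n + 1) * Real.tanh ε) ^ K / (Real.cosh ε ^ (2 * m)) ^ n := by
  have hx : 0 ≤ x := le_trans (by positivity) hlo
  have htanh : Real.tanh x ≤ (n + 1) * Real.tanh ε := by
    have := Real.tanh_nat_mul_le hε (n + 1)
    push_cast at this
    exact (Real.tanh_le_tanh hhi).trans this
  have hcosh : Real.cosh ε ^ n ≤ Real.cosh x := by
    refine (Real.cosh_pow_le_cosh_nat_mul hε n).trans ?_
    rw [Real.cosh_le_cosh, abs_of_nonneg (by positivity), abs_of_nonneg hx]
    exact hlo
  rw [pow_right_comm (Real.cosh ε) (2 * m) n]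
  exact div_le_div₀ (pow_nonneg (mul_nonneg (by positivity) (Real.tanh_nonneg hε)) K)
    (pow_le_pow_left₀ (Real.tanh_nonneg hx) htanh K) (by positivity)
    (pow_le_pow_left₀ (by positivity) hcosh _)

theorem nat_add_three_pow_le (i : ℕ) {K s : ℕ} (hK : K ≤ s) :
    ((i : ℝ) + 3) ^ K ≤ (3 / 4) ^ s * (2 ^ s) ^ (i + 2) := by
  have hi : (i : ℝ) + 3 ≤ 3 * 2 ^ i := by
    have := @Nat.lt_two_pow_self i
    have := Nat.one_le_two_pow (n := i)
    exact_mod_cast (by omega : i + 3 ≤ 3 * 2 ^ i)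
  calc ((i : ℝ) + 3) ^ K ≤ ((i : ℝ) + 3) ^ s := pow_le_pow_right₀ (by linarith) hK
    _ ≤ (3 * 2 ^ i) ^ s := by gcongr
    _ = (3 / 4) ^ s * (2 ^ s) ^ (i + 2) := by
        rw [← pow_mul, mul_comm s, pow_mul, ← mul_pow]
        ring

theorem layer_bound_le_mul_pow {A e τ D r : ℝ} {s : ℕ} (hA : 0 ≤ A) (he : 0 ≤ e) (hτ : 0 ≤ τ)
    (hD : 0 < D) (hr : r * D = 2 ^ s * e) (i : ℕ) {K : ℕ} (hK : K ≤ s) :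
    A * e ^ (i + 3) * (((i : ℝ) + 3) * τ) ^ K / D ^ (i + 2)
      ≤ τ ^ K * (A * e * (3 / 4) ^ s) * r ^ (i + 2) := by
  rw [show r = 2 ^ s * e / D by rw [← hr]; field_simp]
  calc A * e ^ (i + 3) * (((i : ℝ) + 3) * τ) ^ K / D ^ (i + 2)
      = A * e ^ (i + 3) * τ ^ K / D ^ (i + 2) * ((i : ℝ) + 3) ^ K := by rw [mul_pow]; ring
    _ ≤ A * e ^ (i + 3) * τ ^ K / D ^ (i + 2) * ((3 / 4) ^ s * (2 ^ s) ^ (i + 2)) := by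
        gcongr
        exact nat_add_three_pow_le i hK
    _ = τ ^ K * (A * e * (3 / 4) ^ s) * (2 ^ s * e / D) ^ (i + 2) := by
        rw [div_pow (2 ^ s * e), mul_pow]
        ring

theorem summable_tanh_pow_div_cosh_pow_and_tsum_le {ι : Type*} {ℓ : ι → ℝ} {A e ε r : ℝ}
    {K s m : ℕ} (hε : 0 < ε) (hA : 0 ≤ A) (he : 0 ≤ e) (hℓ : ∀ t, 2 * ε < ℓ t)
    (hcount : ∀ (n : ℕ) (u : Finset ι), (∀ t ∈ u, ℓ t ≤ (n + 1) * ε) →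
      (u.card : ℝ) ≤ A * e ^ (n + 1))
    (hK : K ≤ s) (hr1 : r < 1) (hr : r * Real.cosh ε ^ (2 * m) = 2 ^ s * e) :
    Summable (fun t => Real.tanh (ℓ t) ^ K / Real.cosh (ℓ t) ^ (2 * m)) ∧
      ∑' t, Real.tanh (ℓ t) ^ K / Real.cosh (ℓ t) ^ (2 * m)
        ≤ Real.tanh ε ^ K * (A * e * (3 / 4) ^ s * (r ^ 2 * (1 - r)⁻¹)) := by
  classical
  set D := Real.cosh ε ^ (2 * m)
  have hD : 0 < D := by positivity
  have hr0 : 0 ≤ r := by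
    have : 0 ≤ r * D := by rw [hr]; positivity
    exact nonneg_of_mul_nonneg_left this hD
  have hτ : 0 ≤ Real.tanh ε := Real.tanh_nonneg hε.le
  set C := Real.tanh ε ^ K * (A * e * (3 / 4) ^ s)
  let L : ι → ℕ := fun t => ⌊ℓ t / ε⌋₊ - 2
  have hlayer (t : ι) : ((L t : ℝ) + 2) * ε ≤ ℓ t ∧ ℓ t ≤ ((L t : ℝ) + 3) * ε := by
    obtain ⟨hlo, hhi⟩ := nat_floor_sub_two_add_two_le_and_lt ((lt_div_iff₀ hε).2 (hℓ t))
    exact ⟨(le_div_iff₀ hε).1 hlo, ((div_lt_iff₀ hε).1 hhi).le⟩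
  have hgeom : HasSum (fun i : ℕ => C * r ^ (i + 2))
      (Real.tanh ε ^ K * (A * e * (3 / 4) ^ s * (r ^ 2 * (1 - r)⁻¹))) := by
    rw [show (fun i : ℕ => C * r ^ (i + 2)) = fun i => C * r ^ 2 * r ^ i by funext i; ring,
      show Real.tanh ε ^ K * (A * e * (3 / 4) ^ s * (r ^ 2 * (1 - r)⁻¹))
        = C * r ^ 2 * (1 - r)⁻¹ by ring]
    exact (hasSum_geometric_of_lt_one hr0 hr1).mul_left (C * r ^ 2)
  refine hgeom.tsum_eq ▸ summable_and_tsum_le_of_sum_fiber_le L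
    (fun t => div_nonneg (pow_nonneg (Real.tanh_nonneg (by linarith [hℓ t])) _) (by positivity))
    hgeom.summable fun u i => ?_
  have hterm : ∀ t ∈ u.filter (L · = i), Real.tanh (ℓ t) ^ K / Real.cosh (ℓ t) ^ (2 * m)
      ≤ (((i : ℝ) + 3) * Real.tanh ε) ^ K / D ^ (i + 2) := by
    intro t ht
    obtain ⟨hlo, hhi⟩ := hlayer t
    rw [(Finset.mem_filter.1 ht).2] at hlo hhi
    have := tanh_pow_div_cosh_pow_le hε.le (n := i + 2) (by push_cast; linarith)
      (by push_cast; linarith) K m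
    push_cast at this
    convert this using 3; ring
  have hcard : ((u.filter (L · = i)).card : ℝ) ≤ A * e ^ (i + 3) :=
    hcount (i + 2) _ fun t ht => by
      have := (hlayer t).2
      rw [(Finset.mem_filter.1 ht).2] at this
      push_cast; linarith
  calc ∑ t ∈ u with L t = i, Real.tanh (ℓ t) ^ K / Real.cosh (ℓ t) ^ (2 * m)
      ≤ (u.filter (L · = i)).card • ((((i : ℝ) + 3) * Real.tanh ε) ^ K / D ^ (i + 2)) :=
        Finset.sum_le_card_nsmul _ _ _ hterm
    _ ≤ A * e ^ (i + 3) * (((i : ℝ) + 3) * Real.tanh ε) ^ K / D ^ (i + 2) := by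
        rw [nsmul_eq_mul, mul_div_assoc]
        gcongr
    _ ≤ C * r ^ (i + 2) := layer_bound_le_mul_pow hA he hτ hD hr i hK

theorem card_le_ncard_orbitSet {Γ : Subgroup (SL2 × SL2)} {x : SL2} {R : ℝ}
    (hfin : (orbitSet (Γ : Set (SL2 × SL2)) x R).Finite) (u : Finset (SL2 × SL2))
    (hu : ∀ γ ∈ u, γ ∈ Γ ∧ gnorm (γ.1⁻¹ * x * γ.2) ≤ R) :
    u.card ≤ (orbitSet (Γ : Set (SL2 × SL2)) x R).ncard := by
  classical
  rw [← Finset.card_image_of_injective u inv_injective, ← Set.ncard_coe_finset]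
  refine Set.ncard_le_ncard (fun γ hγ => ?_) hfin
  obtain ⟨δ, hδ, rfl⟩ := Finset.mem_image.1 hγ
  exact ⟨Γ.inv_mem (hu δ hδ).1, by simpa using (hu δ hδ).2⟩

theorem lt_cosh_pow_of_mConst_lt {C α ε : ℝ} {s m : ℕ} (hε : 0 < ε) (hC : 0 ≤ C)
    (h : mConst C α ε s < 2 * m) :
    2 ^ s * Real.exp (2 * α * ε) * (1 + 2 ^ s * C * Real.exp (6 * α * ε))
      < Real.cosh ε ^ (2 * m) := by
  have hlog : 0 < Real.log (Real.cosh ε) := Real.log_pos (Real.one_lt_cosh.2 hε.ne')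
  rw [mConst, div_lt_iff₀ hlog] at h
  rw [← Real.log_lt_log_iff (by positivity) (by positivity), Real.log_mul (by positivity)
    (by positivity), Real.log_mul (by positivity) (by positivity), Real.log_pow, Real.log_pow,
    Real.log_exp]
  push_cast
  linarith

theorem lt_one_and_geometric_tail_lt {A e D r : ℝ} {s : ℕ} (hs : 1 ≤ s) (hA : 0 ≤ A)
    (he : 1 ≤ e) (hr : r * D = 2 ^ s * e)
    (hD : 2 ^ s * e * (1 + 2 ^ s * (s * A) * e ^ 3) < D) :
    r < 1 ∧ A * e * (3 / 4) ^ s * (r ^ 2 * (1 - r)⁻¹) < (s * D)⁻¹ := by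
  set X := 2 ^ s * (s * A) * e ^ 3
  have hX : 0 ≤ X := by positivity
  have hD0 : 0 < D := lt_of_le_of_lt (by positivity) hD
  have hr0 : 0 < r := pos_of_mul_pos_left (by rw [hr]; positivity) hD0.le
  have hrX : r * (1 + X) < 1 := by
    rw [← mul_lt_mul_iff_left₀ hD0, one_mul, mul_right_comm, hr]
    exact hD
  have hr1 : r < 1 := by nlinarith
  refine ⟨hr1, ?_⟩
  have hcoef : (3 / 4 : ℝ) ^ s * 2 ^ s * e ^ 2 ≤ 2 ^ s * e ^ 3 := by
    have h34 : (3 / 4 : ℝ) ^ s * 2 ^ s ≤ 2 ^ s := by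
      rw [← mul_pow]; exact pow_le_pow_left₀ (by norm_num) (by norm_num) s
    exact mul_le_mul h34 (pow_le_pow_right₀ he (by norm_num)) (by positivity) (by positivity)
  rw [show ((s : ℝ) * D)⁻¹ = 1 / (s * D) from (one_div _).symm, lt_div_iff₀ (by positivity)]
  calc A * e * (3 / 4) ^ s * (r ^ 2 * (1 - r)⁻¹) * (s * D)
      = s * A * ((3 / 4) ^ s * 2 ^ s * e ^ 2) * r / (1 - r) := by
        linear_combination (A * e * (3 / 4) ^ s * s * r / (1 - r)) * hr
    _ ≤ X * r / (1 - r) := by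
        gcongr
        calc s * A * ((3 / 4) ^ s * 2 ^ s * e ^ 2) ≤ s * A * (2 ^ s * e ^ 3) := by gcongr
          _ = X := by ring
    _ < 1 := by rw [div_lt_one (by linarith)]; linarith

theorem norm_psiB_le (m k : ℕ) (b : ℕ → ℝ) (y : SL2) :
    ‖psiB m k b y‖ ≤ ∑ j ∈ Finset.range k, |b j| * ‖psi m (3 ^ j) y‖ :=
  (norm_sum_le _ _).trans_eq (by simp only [norm_mul, Complex.norm_real, Real.norm_eq_abs])

theorem summable_norm_psiB_and_tsum_le {ι : Type*} (y : ι → SL2) {m k : ℕ} (b : ℕ → ℝ)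
    {τ B : ℝ} (h : ∀ j < k, Summable (fun t => ‖psi m (3 ^ j) (y t)‖) ∧
      ∑' t, ‖psi m (3 ^ j) (y t)‖ ≤ τ ^ 3 ^ j * B) :
    Summable (fun t => ‖psiB m k b (y t)‖) ∧
      ∑' t, ‖psiB m k b (y t)‖ ≤ (∑ j ∈ Finset.range k, |b j| * τ ^ 3 ^ j) * B := by
  have hsum : ∀ j ∈ Finset.range k, Summable (fun t => |b j| * ‖psi m (3 ^ j) (y t)‖) :=
    fun j hj => (h j (Finset.mem_range.1 hj)).1.mul_left _
  have hbound : Summable (fun t => ∑ j ∈ Finset.range k, |b j| * ‖psi m (3 ^ j) (y t)‖) :=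
    summable_sum hsum
  have hψ := Summable.of_nonneg_of_le (fun t => norm_nonneg _) (fun t => norm_psiB_le m k b (y t))
    hbound
  refine ⟨hψ, (hψ.tsum_le_tsum (fun t => norm_psiB_le m k b (y t)) hbound).trans ?_⟩
  rw [Summable.tsum_finsetSum hsum, Finset.sum_mul]
  refine Finset.sum_le_sum fun j hj => ?_
  rw [(h j (Finset.mem_range.1 hj)).1.tsum_mul_left, mul_assoc]
  exact mul_le_mul_of_nonneg_left (h j (Finset.mem_range.1 hj)).2 (abs_nonneg _)

theorem sum_abs_mul_pow_div_le_fb (k : ℕ) (b : ℕ → ℝ) {u : ℝ} (hu : 0 ≤ u) :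
    (∑ j ∈ Finset.range k, |b j| * u ^ 3 ^ j) / 3 ^ (k - 1) ≤ fb k b u := by
  rw [fb, Finset.sum_div]
  refine Finset.sum_le_sum fun j hj => ?_
  have h := abs_div_pow_le_mul_cos_thetaAN b (N := 3) (by decide) le_rfl (Finset.mem_range.1 hj)
  push_cast at h
  rw [mul_div_right_comm]
  exact mul_le_mul_of_nonneg_right h (by positivity)

theorem sum_abs_mul_pow_mul_lt_inv_mul_fb {k : ℕ} {b : ℕ → ℝ} (hb : ∃ j < k, b j ≠ 0)
    {u D B : ℝ} (hu : 0 < u) (hD : 0 < D) (hB : B < (3 ^ (k - 1) * D)⁻¹) :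
    (∑ j ∈ Finset.range k, |b j| * u ^ 3 ^ j) * B < D⁻¹ * fb k b u := by
  obtain ⟨j₀, hj₀, hbj₀⟩ := hb
  have hpos : 0 < ∑ j ∈ Finset.range k, |b j| * u ^ 3 ^ j :=
    Finset.sum_pos' (fun j _ => by positivity)
      ⟨j₀, Finset.mem_range.2 hj₀, mul_pos (abs_pos.2 hbj₀) (pow_pos hu _)⟩
  calc (∑ j ∈ Finset.range k, |b j| * u ^ 3 ^ j) * B
      < (∑ j ∈ Finset.range k, |b j| * u ^ 3 ^ j) * (3 ^ (k - 1) * D)⁻¹ :=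
        mul_lt_mul_of_pos_left hB hpos
    _ = D⁻¹ * ((∑ j ∈ Finset.range k, |b j| * u ^ 3 ^ j) / 3 ^ (k - 1)) := by ring
    _ ≤ D⁻¹ * fb k b u :=
        mul_le_mul_of_nonneg_left (sum_abs_mul_pow_div_le_fb k b hu.le) (by positivity)

theorem summable_norm_psi_and_tsum_le {Γ : Subgroup (SL2 × SL2)} {A α ε r : ℝ} {x : SL2}
    (hN : ∀ R : ℝ, 0 < R → (orbitSet (Γ : Set (SL2 × SL2)) x R).Finite ∧
      ((orbitSet (Γ : Set (SL2 × SL2)) x R).ncard : ℝ) < A * Real.exp (α * R))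
    (hε : 0 < ε) (hA : 0 ≤ A) {K s m : ℕ} (hK : K ≤ s) (hr1 : r < 1)
    (hr : r * Real.cosh ε ^ (2 * m) = 2 ^ s * Real.exp (2 * α * ε)) :
    Summable (fun γ : {γ : SL2 × SL2 // γ ∈ Γ ∧ 4 * ε < gnorm (γ.1⁻¹ * x * γ.2)} =>
      ‖psi m K (γ.1.1⁻¹ * x * γ.1.2)‖) ∧
    ∑' γ : {γ : SL2 × SL2 // γ ∈ Γ ∧ 4 * ε < gnorm (γ.1⁻¹ * x * γ.2)},
        ‖psi m K (γ.1.1⁻¹ * x * γ.1.2)‖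
      ≤ Real.tanh ε ^ K * (A * Real.exp (2 * α * ε) * (3 / 4) ^ s * (r ^ 2 * (1 - r)⁻¹)) := by
  simp_rw [norm_psi]
  refine summable_tanh_pow_div_cosh_pow_and_tsum_le hε hA (Real.exp_pos _).le
    (fun γ => by linarith [γ.2.2]) (fun n u hu => ?_) hK hr1 hr
  have hR : 0 < 2 * ((n : ℝ) + 1) * ε := by positivity
  obtain ⟨hfin, hlt⟩ := hN _ hR
  have hcard := card_le_ncard_orbitSet hfin (u.map (Function.Embedding.subtype _)) (by
    simp only [Finset.mem_map, Function.Embedding.coe_subtype]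
    rintro _ ⟨γ, hγ, rfl⟩
    exact ⟨γ.2.1, by linarith [hu γ hγ]⟩)
  rw [Finset.card_map] at hcard
  calc (u.card : ℝ) ≤ (orbitSet (Γ : Set (SL2 × SL2)) x _).ncard := by exact_mod_cast hcard
    _ ≤ A * Real.exp (α * (2 * ((n : ℝ) + 1) * ε)) := hlt.le
    _ = A * Real.exp (2 * α * ε) ^ (n + 1) := by
        rw [← Real.exp_nat_mul]; push_cast; ring_nf

theorem stmt2_general (Γ : Subgroup (SL2 × SL2))
    (A α ε : ℝ) (hA : 0 < A) (hα : 0 < α) (hε : 0 < ε)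
    (hN : ∀ (x : SL2) (R : ℝ), 0 < R →
      (orbitSet (Γ : Set (SL2 × SL2)) x R).Finite ∧
      ((orbitSet (Γ : Set (SL2 × SL2)) x R).ncard : ℝ) < A * Real.exp (α * R))
    (k : ℕ) (b : ℕ → ℝ) (hb : ∃ j < k, b j ≠ 0)
    (m : ℕ) (hm : mConst (3 ^ (k - 1) * A) α ε (3 ^ (k - 1)) < 2 * m)
    (x : SL2) :
    Summable (fun γ : {γ : SL2 × SL2 // γ ∈ Γ ∧ 4 * ε < gnorm (γ.1⁻¹ * x * γ.2)} =>
      ‖psiB m k b (γ.1.1⁻¹ * x * γ.1.2)‖) ∧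
    ∑' γ : {γ : SL2 × SL2 // γ ∈ Γ ∧ 4 * ε < gnorm (γ.1⁻¹ * x * γ.2)},
        ‖psiB m k b (γ.1.1⁻¹ * x * γ.1.2)‖ <
      Real.cosh ε ^ (-(2 * m : ℤ)) * fb k b (Real.tanh ε) := by
  set s := 3 ^ (k - 1)
  set e := Real.exp (2 * α * ε)
  set D := Real.cosh ε ^ (2 * m)
  have hD : 2 ^ s * e * (1 + 2 ^ s * (s * A) * e ^ 3) < D := by
    have h := lt_cosh_pow_of_mConst_lt hε (by positivity) hm
    rwa [show Real.exp (6 * α * ε) = e ^ 3 by rw [← Real.exp_nat_mul]; ring_nf,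
      show (3 : ℝ) ^ (k - 1) = s by push_cast [s]; rfl] at h
  have hr : 2 ^ s * e / D * D = 2 ^ s * e := div_mul_cancel₀ _ (by positivity)
  obtain ⟨hr1, hB⟩ := lt_one_and_geometric_tail_lt (Nat.one_le_pow _ _ (by norm_num)) hA.le
    (Real.one_le_exp (by positivity)) hr hD
  obtain ⟨hsum, htsum⟩ := summable_norm_psiB_and_tsum_le (m := m) (k := k) _ b fun j hj =>
    summable_norm_psi_and_tsum_le (hN x) hε hA.le
      (Nat.pow_le_pow_right (by norm_num) (by omega : j ≤ k - 1)) hr1 hr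
  refine ⟨hsum, htsum.trans_lt ?_⟩
  rw [zpow_neg, show (2 * m : ℤ) = (2 * m : ℕ) by push_cast; rfl, zpow_natCast]
  exact sum_abs_mul_pow_mul_lt_inv_mul_fb hb (Real.tanh_pos hε) (by positivity)
    (by exact_mod_cast hB)

theorem stmt2 (Γ : Subgroup (SL2 × SL2)) (hcount : Countable Γ)
    (A α ε : ℝ) (hA : 0 < A) (hα : 0 < α) (hε : 0 < ε)
    (hN : ∀ (x : SL2) (R : ℝ), 0 < R →
      (orbitSet (Γ : Set (SL2 × SL2)) x R).Finite ∧
      ((orbitSet (Γ : Set (SL2 × SL2)) x R).ncard : ℝ) < A * Real.exp (α * R))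
    (k : ℕ) (hk : 1 ≤ k) (b : ℕ → ℝ) (hb : ∃ j < k, b j ≠ 0)
    (m : ℕ) (hm : mConst (3 ^ (k - 1) * A) α ε (3 ^ (k - 1)) < 2 * m)
    (x : SL2) (hx : gnorm x ≤ 4 * ε) :
    Summable (fun γ : {γ : SL2 × SL2 // γ ∈ Γ ∧ 4 * ε < gnorm (γ.1⁻¹ * x * γ.2)} =>
      ‖psiB m k b (γ.1.1⁻¹ * x * γ.1.2)‖) ∧
    ∑' γ : {γ : SL2 × SL2 // γ ∈ Γ ∧ 4 * ε < gnorm (γ.1⁻¹ * x * γ.2)},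
        ‖psiB m k b (γ.1.1⁻¹ * x * γ.1.2)‖ <
      Real.cosh ε ^ (-(2 * m : ℤ)) * fb k b (Real.tanh ε) :=
  stmt2_general Γ A α ε hA hα hε hN k b hb m hm x
end

section
/- Let k ≥ 1 be an integer, a = (a₀,…,a_{k−1}) ∈ {±1}^k, and N ≥ 3 an odd integer. Then a_j · cos(N^j θ_{a,N}) > 0 for every j = 0, 1, …, k−1. -/
open Real

/-!
Write `θ_{a,N} = π Σ dᵢ N^{-i}` with `dᵢ = χ(aᵢ) - χ(a_{i-1})`. Multiplying by `N^j` splits the sum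
into the integer part `Σ_{i ≤ j} dᵢ N^{j-i}` and a tail `r = Σ_{i > j} dᵢ N^{j-i}`. Since `N` is odd, the
integer part has the parity of the telescoping sum `Σ_{i ≤ j} dᵢ = χ(a_j)`, and since `|dᵢ| ≤ 1` and
`N ≥ 3`, the tail lies strictly between `-1/2` and `1/2`. Hence `cos(N^j θ_{a,N}) = (-1)^{χ(a_j)} cos(π r)`
with `cos(π r) > 0`, and `(-1)^{χ(a_j)} = a_j`.
-/

open Real Finset

lemma chi_eq_intCast (x : ℝ) : chi x = ((if x = 1 then 0 else 1 : ℤ) : ℝ) := by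
  unfold chi; split_ifs <;> simp

lemma abs_chi_sub_ite_chi_le_one (p : Prop) [Decidable p] (x y : ℝ) :
    |chi x - if p then 0 else chi y| ≤ 1 := by
  unfold chi; split_ifs <;> norm_num

lemma sum_range_succ_sub_prev (f : ℕ → ℤ) (j : ℕ) :
    ∑ i ∈ range (j + 1), (f i - if i = 0 then 0 else f (i - 1)) = f j := by
  induction j with
  | zero => simp
  | succ n ih => rw [sum_range_succ, ih]; simp

lemma even_sum_sub_prev_mul_pow_sub (f : ℕ → ℤ) {N : ℤ} (hN : Odd N) (j : ℕ) :
    Even (∑ i ∈ range (j + 1), (f i - if i = 0 then 0 else f (i - 1)) * N ^ (j - i) - f j) := by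
  -- Replacing each odd power `N ^ (j - i)` by `1` changes the sum by an even number.
  conv => enter [1, 2]; rw [← sum_range_succ_sub_prev f j]
  rw [← sum_sub_distrib]
  refine even_sum _ fun i _ => ?_
  rw [← mul_sub_one]
  exact (even_sub_one.mpr hN.pow).mul_left _

lemma sum_range_pow_succ_le {x : ℝ} (hx0 : 0 ≤ x) (hx : 3 * x ≤ 1) (n : ℕ) :
    ∑ t ∈ range n, x ^ (t + 1) ≤ (1 - x ^ n) / 2 := by
  induction n with
  | zero => simp
  | succ n ih =>
    rw [sum_range_succ, pow_succ]
    nlinarith [pow_nonneg hx0 n, mul_le_mul_of_nonneg_left hx (pow_nonneg hx0 n)]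

lemma abs_sum_mul_pow_succ_lt_half {x : ℝ} (hx0 : 0 < x) (hx : 3 * x ≤ 1) {d : ℕ → ℝ}
    (hd : ∀ t, |d t| ≤ 1) (n : ℕ) : |∑ t ∈ range n, d t * x ^ (t + 1)| < 1 / 2 :=
  calc |∑ t ∈ range n, d t * x ^ (t + 1)|
      ≤ ∑ t ∈ range n, x ^ (t + 1) := by
        refine (abs_sum_le_sum_abs _ _).trans (sum_le_sum fun t _ => ?_)
        rw [abs_mul, abs_of_pos (pow_pos hx0 _)]
        exact mul_le_of_le_one_left (pow_pos hx0 _).le (hd t)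
    _ ≤ (1 - x ^ n) / 2 := sum_range_pow_succ_le hx0.le hx n
    _ < 1 / 2 := by linarith [pow_pos hx0 n]

lemma pow_mul_sum_zpow_neg_eq (d : ℕ → ℝ) {y : ℝ} (hy : y ≠ 0) {j k : ℕ} (hj : j < k) :
    y ^ j * ∑ i ∈ range k, d i * y ^ (-(i : ℤ)) =
      ∑ i ∈ range (j + 1), d i * y ^ (j - i) +
        ∑ t ∈ range (k - (j + 1)), d (j + 1 + t) * y⁻¹ ^ (t + 1) := by
  obtain ⟨n, rfl⟩ := Nat.exists_eq_add_of_lt hj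
  rw [show j + n + 1 - (j + 1) = n by omega, show j + n + 1 = j + 1 + n by omega, sum_range_add,
    mul_add, mul_sum, mul_sum]
  congr 1
  · refine sum_congr rfl fun i hi => ?_
    have hij : i ≤ j := Nat.lt_succ_iff.mp (mem_range.mp hi)
    rw [zpow_neg, zpow_natCast, pow_sub₀ _ hy hij]
    ring
  · refine sum_congr rfl fun t _ => ?_
    rw [zpow_neg, zpow_natCast, inv_pow, show j + 1 + t = j + (t + 1) by ring, pow_add]
    field_simp

lemma sign_mul_cos_pi_mul_int_add_pos {s : ℝ} (hs : s = 1 ∨ s = -1) {A : ℤ}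
    (hA : Even (A - if s = 1 then 0 else 1)) {r : ℝ} (hr : |r| < 1 / 2) :
    0 < s * cos (π * (A + r)) := by
  have hcos : 0 < cos (π * r) := by
    apply cos_pos_of_mem_Ioo
    constructor <;> nlinarith [abs_lt.mp hr, pi_pos]
  rw [mul_add, add_comm, mul_comm π (A : ℝ), cos_add_int_mul_pi]
  rcases hs with rfl | rfl
  · rw [if_pos rfl, sub_zero] at hA
    simpa [hA.neg_one_zpow] using hcos
  · rw [if_neg (by norm_num), even_sub_one] at hA
    simpa [hA.neg_one_zpow] using hcos

theorem stmt5_general (k : ℕ) (a : ℕ → ℝ) (ha : ∀ j < k, a j = 1 ∨ a j = -1)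
    (N : ℕ) (hN3 : 3 ≤ N) (hNodd : Odd N) :
    ∀ j < k, 0 < a j * Real.cos ((N : ℝ) ^ j * thetaAN a k N) := by
  intro j hj
  have hN : (3 : ℝ) ≤ N := by exact_mod_cast hN3
  have hsplit := pow_mul_sum_zpow_neg_eq
    (fun i => chi (a i) - if i = 0 then 0 else chi (a (i - 1))) (by positivity : (N : ℝ) ≠ 0) hj
  have htail := abs_sum_mul_pow_succ_lt_half (by positivity)
    (by rw [← div_eq_mul_inv, div_le_one (by positivity)]; exact hN : 3 * (N : ℝ)⁻¹ ≤ 1)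
    (fun t => abs_chi_sub_ite_chi_le_one (j + 1 + t = 0) (a (j + 1 + t)) (a (j + 1 + t - 1)))
    (k - (j + 1))
  have hpar := even_sum_sub_prev_mul_pow_sub (fun i => if a i = 1 then 0 else 1)
    (by exact_mod_cast hNodd : Odd (N : ℤ)) j
  rw [thetaAN, mul_left_comm, hsplit]
  convert sign_mul_cos_pi_mul_int_add_pos (ha j hj) hpar htail using 5
  push_cast [chi_eq_intCast]
  rfl

theorem stmt5 (k : ℕ) (hk : 1 ≤ k) (a : ℕ → ℝ) (ha : ∀ j < k, a j = 1 ∨ a j = -1)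
    (N : ℕ) (hN3 : 3 ≤ N) (hNodd : Odd N) :
    ∀ j < k, 0 < a j * Real.cos ((N : ℝ) ^ j * thetaAN a k N) :=
  stmt5_general k a ha N hN3 hNodd
end

section
/- Let k ≥ 1 be an integer and a = (a₀,…,a_{k−1}) ∈ {±1}^k. Then a_j · cos(3^j θ_{a,3}) ≥ 3^{−(k−1)} for every j = 0, 1, …, k−1; in particular |cos(3^j θ_{a,3})|^{−1} ≤ 3^{k−1}. -/
open Real

/-
Write θ_{a,3} = π Σ_{i<k} n_i 3^{-i} with integer jumps n_i = χ(a_i) - χ(a_{i-1}) ∈ {-1, 0, 1}.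
Then 3^j θ_{a,3} = π (M + r), where M = Σ_{i ≤ j} n_i 3^{j-i} is an integer and
r = Σ_{j < i < k} n_i 3^{j-i}. Since 3 is odd, M ≡ Σ_{i ≤ j} n_i = χ(a_j) (mod 2), so
cos(3^j θ_{a,3}) = a_j cos(π r). The tail satisfies |r| ≤ (1 - e)/2 with e = 3^{-(k-1-j)},
and Jordan's inequality gives cos(π r) ≥ 1 - 2|r| ≥ e ≥ 3^{-(k-1)}.
-/

noncomputable def chiInt (x : ℝ) : ℤ := if x = 1 then 0 else 1

noncomputable def thetaJump (a : ℕ → ℝ) (i : ℕ) : ℤ :=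
  chiInt (a i) - if i = 0 then 0 else chiInt (a (i - 1))

noncomputable def thetaTail (a : ℕ → ℝ) (k j : ℕ) : ℝ :=
  ∑ i ∈ Finset.Ico (j + 1) k, (thetaJump a i : ℝ) * (3 : ℝ) ^ ((j : ℤ) - i)

lemma cast_chiInt (x : ℝ) : (chiInt x : ℝ) = chi x := by
  unfold chiInt chi
  split_ifs <;> simp

lemma abs_thetaJump_le_one (a : ℕ → ℝ) (i : ℕ) : |thetaJump a i| ≤ 1 := by
  unfold thetaJump chiInt
  split_ifs <;> decide

lemma sum_range_succ_thetaJump (a : ℕ → ℝ) (j : ℕ) :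
    ∑ i ∈ Finset.range (j + 1), thetaJump a i = chiInt (a j) := by
  have h := Finset.sum_range_sub (fun i => if i = 0 then 0 else chiInt (a (i - 1))) (j + 1)
  simp only [Nat.add_sub_cancel, if_neg (Nat.succ_ne_zero _)] at h
  simp [thetaJump, h]

lemma neg_one_zpow_chiInt {x : ℝ} (hx : x = 1 ∨ x = -1) : (-1 : ℝ) ^ chiInt x = x := by
  rcases hx with rfl | rfl <;> norm_num [chiInt]

lemma pow_mul_thetaAN (a : ℕ → ℝ) (k j : ℕ) {N : ℝ} (hN : N ≠ 0) :
    N ^ j * thetaAN a k N =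
      π * ∑ i ∈ Finset.range k, (thetaJump a i : ℝ) * N ^ ((j : ℤ) - i) := by
  rw [thetaAN, mul_left_comm, Finset.mul_sum, Finset.mul_sum, Finset.mul_sum]
  refine Finset.sum_congr rfl fun i _ => ?_
  rw [zpow_sub₀ hN, zpow_neg, zpow_natCast, zpow_natCast]
  simp only [thetaJump, Int.cast_sub, cast_chiInt, apply_ite, Int.cast_zero]
  ring

lemma neg_one_zpow_sum_mul_three_pow {ι : Type*} (s : Finset ι) (n : ι → ℤ)
    (e : ι → ℕ) :
    (-1 : ℝ) ^ (∑ i ∈ s, n i * 3 ^ e i) = (-1 : ℝ) ^ (∑ i ∈ s, n i) := by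
  have heven : Even (∑ i ∈ s, n i * 3 ^ e i - ∑ i ∈ s, n i) := by
    rw [← Finset.sum_sub_distrib]
    refine Finset.even_sum _ fun i _ => ?_
    rw [← mul_sub_one]
    exact ((Odd.pow (by decide : Odd (3 : ℤ))).sub_odd odd_one).mul_left _
  rw [← sub_add_cancel (∑ i ∈ s, n i * 3 ^ e i) (∑ i ∈ s, n i),
    zpow_add₀ (by norm_num), heven.neg_one_zpow, one_mul]

lemma abs_sum_Ico_mul_three_zpow_le {c : ℕ → ℝ} (hc : ∀ i, |c i| ≤ 1) (j k : ℕ) :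
    |∑ i ∈ Finset.Ico (j + 1) k, c i * (3 : ℝ) ^ ((j : ℤ) - i)| ≤
      (1 - (3 : ℝ)⁻¹ ^ (k - (j + 1))) / 2 :=
  calc |∑ i ∈ Finset.Ico (j + 1) k, c i * (3 : ℝ) ^ ((j : ℤ) - i)|
      ≤ ∑ i ∈ Finset.Ico (j + 1) k, (3 : ℝ) ^ ((j : ℤ) - i) := by
        refine (Finset.abs_sum_le_sum_abs _ _).trans (Finset.sum_le_sum fun i _ => ?_)
        have h3 : (0 : ℝ) < 3 ^ ((j : ℤ) - i) := zpow_pos (by norm_num) _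
        rw [abs_mul, abs_of_pos h3]
        exact mul_le_of_le_one_left h3.le (hc i)
    _ = ∑ t ∈ Finset.range (k - (j + 1)), (3 : ℝ)⁻¹ * (3 : ℝ)⁻¹ ^ t := by
        rw [Finset.sum_Ico_eq_sum_range]
        refine Finset.sum_congr rfl fun t _ => ?_
        rw [show (j : ℤ) - (j + 1 + t : ℕ) = -((t + 1 : ℕ) : ℤ) by push_cast; ring,
          zpow_neg, zpow_natCast, ← inv_pow, pow_succ']
    _ = (1 - (3 : ℝ)⁻¹ ^ (k - (j + 1))) / 2 := by
        rw [← Finset.mul_sum, geom_sum_eq (by norm_num)]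
        ring

lemma le_cos_pi_mul_of_abs_le {e r : ℝ} (he : 0 ≤ e) (hr : |r| ≤ (1 - e) / 2) :
    e ≤ cos (π * r) := by
  have hπ := pi_pos
  have hcos : cos (π * r) = sin (π / 2 - π * |r|) := by
    rw [sin_pi_div_two_sub, ← cos_abs, abs_mul, abs_of_pos hπ]
  have hjordan := mul_le_sin (x := π / 2 - π * |r|)
    (by nlinarith [abs_nonneg r]) (by nlinarith [abs_nonneg r])
  have hlin : 2 / π * (π / 2 - π * |r|) = 1 - 2 * |r| := by field_simp
  linarith

lemma mul_cos_three_pow_mul_thetaAN {a : ℕ → ℝ} {k j : ℕ} (hj : j < k)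
    (haj : a j = 1 ∨ a j = -1) :
    a j * cos ((3 : ℝ) ^ j * thetaAN a k 3) = cos (π * thetaTail a k j) := by
  set M : ℤ := ∑ i ∈ Finset.range (j + 1), thetaJump a i * 3 ^ (j - i)
  have hsplit : (3 : ℝ) ^ j * thetaAN a k 3 = thetaTail a k j * π + M * π := by
    rw [pow_mul_thetaAN a k j (by norm_num),
      ← Finset.sum_range_add_sum_Ico _ (Nat.succ_le_of_lt hj)]
    have hhead :
        ∑ i ∈ Finset.range (j + 1), (thetaJump a i : ℝ) * (3 : ℝ) ^ ((j : ℤ) - i) = M := by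
      push_cast [M]
      refine Finset.sum_congr rfl fun i hi => ?_
      rw [← Nat.cast_sub (Finset.mem_range_succ_iff.mp hi), zpow_natCast]
    rw [hhead, thetaTail]
    ring
  have hsign : (-1 : ℝ) ^ M = a j := by
    rw [← neg_one_zpow_chiInt haj, ← sum_range_succ_thetaJump]
    exact neg_one_zpow_sum_mul_three_pow _ _ _
  rw [hsplit, cos_add_int_mul_pi, hsign, ← mul_assoc, mul_comm (thetaTail a k j)]
  rcases haj with h | h <;> simp [h]

theorem stmt6_general (k : ℕ) (a : ℕ → ℝ) (ha : ∀ j < k, a j = 1 ∨ a j = -1) :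
    ∀ j < k,
      ((3 : ℝ) ^ (k - 1))⁻¹ ≤ a j * Real.cos ((3 : ℝ) ^ j * thetaAN a k 3) ∧
      |Real.cos ((3 : ℝ) ^ j * thetaAN a k 3)|⁻¹ ≤ (3 : ℝ) ^ (k - 1) := by
  intro j hj
  have htail : |thetaTail a k j| ≤ (1 - (3 : ℝ)⁻¹ ^ (k - (j + 1))) / 2 :=
    abs_sum_Ico_mul_three_zpow_le (fun i => by exact_mod_cast abs_thetaJump_le_one a i) j k
  have hscale : ((3 : ℝ) ^ (k - 1))⁻¹ ≤ (3 : ℝ)⁻¹ ^ (k - (j + 1)) := by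
    rw [← inv_pow]
    exact pow_le_pow_of_le_one (by norm_num) (by norm_num) (by omega)
  have hlower : ((3 : ℝ) ^ (k - 1))⁻¹ ≤ a j * Real.cos ((3 : ℝ) ^ j * thetaAN a k 3) := by
    rw [mul_cos_three_pow_mul_thetaAN hj (ha j hj)]
    exact hscale.trans (le_cos_pi_mul_of_abs_le (by positivity) htail)
  refine ⟨hlower, inv_le_of_inv_le₀ (by positivity) (hlower.trans ?_)⟩
  rcases ha j hj with h | h <;> simp [h, le_abs_self, neg_le_abs]

theorem stmt6 (k : ℕ) (hk : 1 ≤ k) (a : ℕ → ℝ) (ha : ∀ j < k, a j = 1 ∨ a j = -1) :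
    ∀ j < k,
      ((3 : ℝ) ^ (k - 1))⁻¹ ≤ a j * Real.cos ((3 : ℝ) ^ j * thetaAN a k 3) ∧
      |Real.cos ((3 : ℝ) ^ j * thetaAN a k 3)|⁻¹ ≤ (3 : ℝ) ^ (k - 1) :=
  stmt6_general k a ha
end

section
/- Let k ≥ 1 be an integer, a = (a₀,…,a_{k−1}) ∈ {±1}^k, and N ≥ 3 an odd integer. Then N^{k−1} θ_{a,N} ≡ π χ(a_{k−1}) (mod 2π); in particular cos(N^{k−1} θ_{a,N}) = a_{k−1}. -/
open Real

theorem stmt7 (k : ℕ) (hk : 1 ≤ k) (a : ℕ → ℝ) (ha : ∀ j < k, a j = 1 ∨ a j = -1)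
    (N : ℕ) (hN3 : 3 ≤ N) (hNodd : Odd N) :
    (∃ n : ℤ, (N : ℝ) ^ (k - 1) * thetaAN a k N = Real.pi * chi (a (k - 1)) + 2 * Real.pi * n) ∧
    Real.cos ((N : ℝ) ^ (k - 1) * thetaAN a k N) = a (k - 1) := by

  have hNpos : (0:ℝ) < N := by positivity
  set e : ℕ → ℤ := fun i => if a i = 1 then 0 else 1 with he
  have hchi : ∀ i, chi (a i) = ((e i : ℤ) : ℝ) := by
    intro i; simp only [chi, he]; split_ifs <;> simp
  set d : ℕ → ℤ := fun i => e i - if i = 0 then 0 else e (i - 1) with hd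
  have htele : ∀ m, 1 ≤ m → ∑ i ∈ Finset.range m, d i = e (m - 1) := by
    intro m hm
    induction m with
    | zero => omega
    | succ n ih =>
      rcases Nat.lt_or_ge 1 (n+1) with h | h
      · have hn : 1 ≤ n := by omega
        rw [Finset.sum_range_succ, ih hn]
        have hn0 : n ≠ 0 := by omega
        simp only [hd, hn0, if_false, Nat.add_sub_cancel]
        ring
      · have : n = 0 := by omega
        subst this
        simp [hd]
  set M : ℤ := ∑ i ∈ Finset.range k, d i * (N:ℤ)^(k-1-i) with hM
  have step1 : (N : ℝ) ^ (k - 1) * thetaAN a k N = Real.pi * (M : ℝ) := by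
    rw [thetaAN, ← mul_assoc, mul_comm ((N:ℝ)^(k-1)) Real.pi, mul_assoc, Finset.mul_sum]
    have hMcast : ((M : ℤ) : ℝ) = ∑ i ∈ Finset.range k, (d i : ℝ) * (N:ℝ)^(k-1-i) := by
      rw [hM]; push_cast; rfl
    rw [hMcast]
    congr 1
    apply Finset.sum_congr rfl
    intro i hi
    have hik : i < k := Finset.mem_range.mp hi
    have hexp : (N:ℝ)^(k-1) * (N:ℝ)^(-(i:ℤ)) = (N:ℝ)^(k-1-i) := by
      rw [← zpow_natCast ((N:ℝ)) (k-1), ← zpow_add₀ (ne_of_gt hNpos),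
        ← zpow_natCast ((N:ℝ)) (k-1-i)]
      congr 1
      omega
    have hdi : ((d i : ℤ) : ℝ) = chi (a i) - if i = 0 then 0 else chi (a (i-1)) := by
      simp only [hd, hchi, Int.cast_sub, apply_ite (fun z : ℤ => (z:ℝ)), Int.cast_zero]
    rw [hdi, ← hexp]
    ring
  have hdvd : (2:ℤ) ∣ (M - e (k-1)) := by
    rw [hM, ← htele k hk, ← Finset.sum_sub_distrib]
    apply Finset.dvd_sum
    intro i _
    have h1 : d i * (N:ℤ)^(k-1-i) - d i = d i * ((N:ℤ)^(k-1-i) - 1) := by ring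
    rw [h1]
    apply Dvd.dvd.mul_left
    have hodd : Odd ((N:ℤ)^(k-1-i)) := ((Int.odd_coe_nat N).mpr hNodd).pow
    obtain ⟨m, hm⟩ := hodd
    exact ⟨m, by omega⟩
  obtain ⟨n, hn⟩ := hdvd
  have hMeq : (M : ℝ) = (e (k-1) : ℝ) + 2 * (n : ℝ) := by
    have : (M : ℤ) = e (k-1) + 2 * n := by omega
    exact_mod_cast this
  have h1 : (N : ℝ) ^ (k - 1) * thetaAN a k N
      = Real.pi * chi (a (k - 1)) + 2 * Real.pi * n := by
    rw [step1, hMeq, hchi (k-1)]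
    ring
  refine ⟨⟨n, h1⟩, ?_⟩
  rw [h1]
  have h2 : Real.pi * chi (a (k-1)) + 2 * Real.pi * n
      = Real.pi * chi (a (k-1)) + n * (2 * Real.pi) := by ring
  rw [h2, Real.cos_add_int_mul_two_pi]
  rcases ha (k-1) (by omega) with h | h <;> rw [h] <;> norm_num [chi, Real.cos_pi]
end

section
/- Let k ≥ 1 be an integer, a = (a₀,…,a_{k−1}) ∈ {±1}^k, and N ≥ 3 an odd integer. Then for every j = 0, 1, …, k−1, one has |N^j θ_{a,N} − N^j θ_{(a₀,…,a_j),N}| < π/2, where θ_{(a₀,…,a_j),N} is defined using the truncated tuple (a₀,…,a_j) ∈ {±1}^{j+1}. -/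
open Real

/-! Each coefficient `χ(aᵢ) − χ(aᵢ₋₁)` of `θ` lies in `[-1, 1]`, so `N^j (θ_{a,N} − θ_{(a₀,…,a_j),N})`
is `π` times a tail `∑_{i>j} cᵢ N^{j-i}` with `|cᵢ| ≤ 1`, strictly smaller than the geometric
series `1/(N-1) ≤ 1/2`. -/

open Finset

lemma chi_eq_zero_or_one (x : ℝ) : chi x = 0 ∨ chi x = 1 := by
  unfold chi
  split_ifs <;> simp

lemma abs_chi_sub_chi_prev_le_one (a : ℕ → ℝ) (i : ℕ) :
    |chi (a i) - if i = 0 then 0 else chi (a (i - 1))| ≤ 1 := by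
  rcases chi_eq_zero_or_one (a i) with h | h <;>
    rcases chi_eq_zero_or_one (a (i - 1)) with h' | h' <;> split_ifs <;> simp [h, h']

lemma thetaAN_sub_thetaAN (a : ℕ → ℝ) (N : ℝ) {m n : ℕ} (hmn : m ≤ n) :
    thetaAN a n N - thetaAN a m N = π * ∑ i ∈ Ico m n,
      (chi (a i) - if i = 0 then 0 else chi (a (i - 1))) * N ^ (-(i : ℤ)) := by
  unfold thetaAN
  rw [← sum_range_add_sum_Ico _ hmn]
  ring

lemma geom_sum_Ico_lt_of_lt_one {K : Type*} [Field K] [LinearOrder K] [IsStrictOrderedRing K]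
    {x : K} (hx0 : 0 < x) (hx1 : x < 1) (m n : ℕ) :
    ∑ i ∈ Ico m n, x ^ i < x ^ m / (1 - x) := by
  rcases le_or_gt m n with hmn | hnm
  · rw [geom_sum_Ico' hx1.ne hmn]
    exact div_lt_div_of_pos_right (sub_lt_self _ (pow_pos hx0 n)) (sub_pos.2 hx1)
  · rw [Ico_eq_empty_of_le hnm.le, sum_empty]
    exact div_pos (pow_pos hx0 m) (sub_pos.2 hx1)

lemma abs_pow_mul_sum_Ico_zpow_neg_lt {N : ℝ} (hN : 1 < N) (c : ℕ → ℝ) (hc : ∀ i, |c i| ≤ 1)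
    (j n : ℕ) : |N ^ j * ∑ i ∈ Ico (j + 1) n, c i * N ^ (-(i : ℤ))| < 1 / (N - 1) := by
  have hN0 : 0 < N := zero_lt_one.trans hN
  have hr0 : 0 < N⁻¹ := inv_pos.mpr hN0
  have hr1 : N⁻¹ < 1 := inv_lt_one_of_one_lt₀ hN
  calc |N ^ j * ∑ i ∈ Ico (j + 1) n, c i * N ^ (-(i : ℤ))|
      ≤ N ^ j * ∑ i ∈ Ico (j + 1) n, N⁻¹ ^ i := by
        rw [abs_mul, abs_of_pos (pow_pos hN0 j)]
        gcongr
        refine (abs_sum_le_sum_abs _ _).trans (sum_le_sum fun i _ => ?_)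
        rw [zpow_neg, zpow_natCast, ← inv_pow, abs_mul, abs_of_pos (pow_pos hr0 i)]
        exact mul_le_of_le_one_left (pow_pos hr0 i).le (hc i)
    _ < N ^ j * (N⁻¹ ^ (j + 1) / (1 - N⁻¹)) := by
        gcongr
        exact geom_sum_Ico_lt_of_lt_one hr0 hr1 _ _
    _ = 1 / (N - 1) := by
        have : N - 1 ≠ 0 := by linarith
        rw [inv_pow]
        field_simp
        ring

theorem stmt8_general (k : ℕ) (a : ℕ → ℝ)
    (N : ℕ) (hN3 : 3 ≤ N) :
    ∀ j < k, |(N : ℝ) ^ j * thetaAN a k N - (N : ℝ) ^ j * thetaAN a (j + 1) N| < Real.pi / 2 := by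
  intro j hj
  have hN : (3 : ℝ) ≤ N := by exact_mod_cast hN3
  rw [← mul_sub, thetaAN_sub_thetaAN a N hj, mul_left_comm, abs_mul, abs_of_pos pi_pos]
  calc π * |(N : ℝ) ^ j * _| < π * (1 / (N - 1)) :=
        mul_lt_mul_of_pos_left
          (abs_pow_mul_sum_Ico_zpow_neg_lt (by linarith) _ (abs_chi_sub_chi_prev_le_one a) j k)
          pi_pos
    _ ≤ π / 2 := by
        rw [mul_one_div]
        gcongr
        linarith

theorem stmt8 (k : ℕ) (hk : 1 ≤ k) (a : ℕ → ℝ) (ha : ∀ j < k, a j = 1 ∨ a j = -1)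
    (N : ℕ) (hN3 : 3 ≤ N) (hNodd : Odd N) :
    ∀ j < k, |(N : ℝ) ^ j * thetaAN a k N - (N : ℝ) ^ j * thetaAN a (j + 1) N| < Real.pi / 2 :=
  stmt8_general k a N hN3
end

section
/- For any countable subset Γ of SL(2,ℝ)×SL(2,ℝ), there exists (g₁,g₂) ∈ SL(2,ℝ)×SL(2,ℝ) such that ‖g₁⁻¹ γ₁ g₁‖ ≠ ‖g₂⁻¹ γ₂ g₂‖ for every non-central element γ = (γ₁,γ₂) ∈ Γ. -/
open Real

/-!
Since `‖g‖ = arcosh (entrySqSum g / 2)` with `entrySqSum g ≥ 2`, it suffices to separate the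
values of `entrySqSum` at `g₁⁻¹ γ₁ g₁` and `g₂⁻¹ γ₂ g₂`; at a conjugate of `±1` the value is `2`.
Take `gᵢ = n(x) a(tᵢ)` with `n(x)` lower unipotent. Conjugating `m` by `a(t)` turns `entrySqSum m`
into `m₀₀² + m₁₁² + m₀₁² e^{-4t} + m₁₀² e^{4t}`, and the `(1,0)` entry of `n(x)⁻¹ m n(x)` is a
quadratic polynomial in `x` which vanishes identically only for `m = ±1`. So for all but countably
many `x`, the function `t ↦ entrySqSum (g⁻¹ m g)` has finite fibres for every non-central component
`m` of an element of `Γ`, and `t₁`, then `t₂`, can be chosen outside countably many finite sets.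
-/

open Matrix.SpecialLinearGroup

theorem exists_forall_ne_of_countable {ι α β : Type*} [Uncountable α] {S : Set ι}
    (hS : S.Countable) (f : ι → α → β) (c : ι → β)
    (hf : ∀ i ∈ S, {a | f i a = c i}.Countable) : ∃ a, ∀ i ∈ S, f i a ≠ c i := by
  obtain ⟨a, ha⟩ : ∃ a, a ∉ ⋃ i ∈ S, {a | f i a = c i} := by
    by_contra! h
    exact Set.not_countable_univ (Set.eq_univ_of_forall h ▸ hS.biUnion hf)
  exact ⟨a, fun i hi hai => ha (Set.mem_biUnion hi hai)⟩

open Polynomial in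
theorem finite_setOf_quadratic_eq_zero {R : Type*} [CommRing R] [IsDomain R] {a b c : R}
    (h : a ≠ 0 ∨ b ≠ 0 ∨ c ≠ 0) : {x | a * x ^ 2 + b * x + c = 0}.Finite := by
  set p : R[X] := C a * X ^ 2 + C b * X + C c
  have hp : p ≠ 0 := by
    intro hp
    have h2 : p.coeff 2 = a := by simp [p]
    have h1 : p.coeff 1 = b := by simp [p]
    have h0 : p.coeff 0 = c := by simp [p]
    rw [hp, coeff_zero] at h2 h1 h0
    tauto
  simpa [p] using finite_setOfPred_isRoot hp

def entrySqSum (g : SL2) : ℝ := g.1 0 0 ^ 2 + g.1 0 1 ^ 2 + g.1 1 0 ^ 2 + g.1 1 1 ^ 2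

theorem two_le_entrySqSum (g : SL2) : 2 ≤ entrySqSum g := by
  have hdet := g.2
  rw [Matrix.det_fin_two] at hdet
  unfold entrySqSum
  nlinarith [sq_nonneg (g.1 0 0 - g.1 1 1), sq_nonneg (g.1 0 1 + g.1 1 0)]

theorem acosh_strictMonoOn : StrictMonoOn acosh (Set.Ici 1) := by
  intro x (hx : 1 ≤ x) y _ hxy
  have hsqrt : √(x ^ 2 - 1) ≤ √(y ^ 2 - 1) := Real.sqrt_le_sqrt (by nlinarith)
  exact Real.log_lt_log (by positivity) (by linarith)

theorem entrySqSum_eq_of_gnorm_eq {g h : SL2} (hgh : gnorm g = gnorm h) :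
    entrySqSum g = entrySqSum h := by
  have hg := two_le_entrySqSum g
  have hh := two_le_entrySqSum h
  have := acosh_strictMonoOn.injOn (x₁ := entrySqSum g / 2) (x₂ := entrySqSum h / 2)
    (by simp only [Set.mem_Ici]; linarith) (by simp only [Set.mem_Ici]; linarith) hgh
  linarith

theorem entrySqSum_conj_of_coe_eq_one_or_neg_one (g m : SL2) (hm : m.1 = 1 ∨ m.1 = -1) :
    entrySqSum (g⁻¹ * m * g) = 2 := by
  have hg : (g⁻¹).1 * g.1 = 1 := by rw [← coe_mul, inv_mul_cancel, coe_one]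
  have hconj : (g⁻¹ * m * g).1 = m.1 := by
    rcases hm with hm | hm <;> simp only [coe_mul, hm, mul_one, mul_neg, Matrix.neg_mul, hg]
  unfold entrySqSum
  rcases hm with hm | hm <;> norm_num [hconj, hm]

def nMat (x : ℝ) : SL2 := ⟨!![1, 0; x, 1], by simp [Matrix.det_fin_two_of]⟩

theorem conj_nMat_one_zero (m : SL2) (x : ℝ) :
    ((nMat x)⁻¹ * m * nMat x).1 1 0 = m.1 1 0 + (m.1 1 1 - m.1 0 0) * x - m.1 0 1 * x ^ 2 := by
  simp only [coe_mul, coe_inv]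
  simp only [nMat, Matrix.adjugate_fin_two, Matrix.of_apply, Matrix.cons_val', Matrix.cons_val_one,
    Matrix.cons_val_fin_one, Matrix.cons_val_zero, neg_zero, Matrix.cons_mul, Matrix.empty_mul,
    Equiv.symm_apply_apply, Matrix.mul_apply, Matrix.vecMul, dotProduct, Fin.sum_univ_two]
  ring

theorem entrySqSum_conj_aMat (m : SL2) (t : ℝ) :
    entrySqSum ((aMat t)⁻¹ * m * aMat t) = m.1 0 0 ^ 2 + m.1 1 1 ^ 2
      + m.1 0 1 ^ 2 * Real.exp (-(4 * t)) + m.1 1 0 ^ 2 * Real.exp (4 * t) := by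
  have h4 : Real.exp (4 * t) = Real.exp t ^ 4 := by rw [← Real.exp_nat_mul]; norm_num
  simp only [entrySqSum, coe_mul, coe_inv]
  simp only [aMat, Matrix.adjugate_fin_two, Matrix.of_apply, Matrix.cons_val', Matrix.cons_val_one,
    Matrix.cons_val_fin_one, Matrix.cons_val_zero, neg_zero, Matrix.cons_mul, Matrix.empty_mul,
    Equiv.symm_apply_apply, Matrix.mul_apply, Matrix.vecMul, dotProduct, Fin.sum_univ_two,
    Real.exp_neg, h4]
  field_simp
  ring

theorem finite_setOf_entrySqSum_conj_aMat_eq (m : SL2) (hm : m.1 1 0 ≠ 0) (c : ℝ) :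
    {t | entrySqSum ((aMat t)⁻¹ * m * aMat t) = c}.Finite := by
  have hroots : {y : ℝ | m.1 1 0 ^ 2 * y ^ 2 + (m.1 0 0 ^ 2 + m.1 1 1 ^ 2 - c) * y
      + m.1 0 1 ^ 2 = 0}.Finite :=
    finite_setOf_quadratic_eq_zero (Or.inl (pow_ne_zero 2 hm))
  have hinj : Function.Injective fun t : ℝ => Real.exp (4 * t) := fun s t hst => by
    have := Real.exp_injective hst
    linarith
  refine (hroots.preimage hinj.injOn).subset fun t ht => ?_
  have ht : _ = c := (entrySqSum_conj_aMat m t).symm.trans ht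
  have hexp : Real.exp (-(4 * t)) * Real.exp (4 * t) = 1 := by
    rw [← Real.exp_add, neg_add_cancel, Real.exp_zero]
  simp only [Set.mem_preimage, Set.mem_ofPred_eq]
  linear_combination Real.exp (4 * t) * ht - m.1 0 1 ^ 2 * hexp

theorem finite_setOf_conj_nMat_one_zero_eq_zero (m : SL2) (hm : ¬(m.1 = 1 ∨ m.1 = -1)) :
    {x | ((nMat x)⁻¹ * m * nMat x).1 1 0 = 0}.Finite := by
  have hcoeff : -m.1 0 1 ≠ 0 ∨ m.1 1 1 - m.1 0 0 ≠ 0 ∨ m.1 1 0 ≠ 0 := by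
    by_contra! h
    obtain ⟨h01, h11, h10⟩ := h
    have hdiag : m.1 = m.1 0 0 • (1 : Matrix (Fin 2) (Fin 2) ℝ) := by
      rw [Matrix.eta_fin_two m.1, neg_eq_zero.1 h01, h10, (sub_eq_zero.1 h11)]
      simp [Matrix.one_fin_two]
    have hdet := m.2
    rw [Matrix.det_fin_two] at hdet
    have hsq : (m.1 0 0 - 1) * (m.1 0 0 + 1) = 0 := by
      linear_combination hdet - m.1 0 0 * h11 + m.1 0 1 * h10
    apply hm
    rcases mul_eq_zero.1 hsq with h | h
    · left; rw [hdiag, sub_eq_zero.1 h, one_smul]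
    · right; rw [hdiag, eq_neg_of_add_eq_zero_left h, neg_one_smul]
  convert finite_setOf_quadratic_eq_zero hcoeff using 3 with x
  rw [conj_nMat_one_zero]
  ring_nf

theorem exists_nMat_finite_setOf_entrySqSum_conj_eq {M : Set SL2} (hM : M.Countable) :
    ∃ x, ∀ m ∈ M, ¬(m.1 = 1 ∨ m.1 = -1) → ∀ c,
      {t | entrySqSum ((nMat x * aMat t)⁻¹ * m * (nMat x * aMat t)) = c}.Finite := by
  obtain ⟨x, hx⟩ := exists_forall_ne_of_countable (hM.mono Set.inter_subset_left)
    (fun m y => ((nMat y)⁻¹ * m * nMat y).1 1 0) (fun _ => 0)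
    (fun m hm => (finite_setOf_conj_nMat_one_zero_eq_zero m hm.2).countable)
  refine ⟨x, fun m hm hns c => ?_⟩
  have hconj : ∀ t, (nMat x * aMat t)⁻¹ * m * (nMat x * aMat t)
      = (aMat t)⁻¹ * ((nMat x)⁻¹ * m * nMat x) * aMat t := fun t => by group
  simpa only [hconj] using finite_setOf_entrySqSum_conj_aMat_eq _ (hx m ⟨hm, hns⟩) c

theorem stmt9 (Γ : Set (SL2 × SL2)) (hΓ : Γ.Countable) :
    ∃ g : SL2 × SL2, ∀ γ ∈ Γ, ¬IsCentral γ →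
      gnorm (g.1⁻¹ * γ.1 * g.1) ≠ gnorm (g.2⁻¹ * γ.2 * g.2) := by
  obtain ⟨x, hx⟩ :=
    exists_nMat_finite_setOf_entrySqSum_conj_eq ((hΓ.image Prod.fst).union (hΓ.image Prod.snd))
  let F : SL2 → ℝ → ℝ := fun m t => entrySqSum ((nMat x * aMat t)⁻¹ * m * (nMat x * aMat t))
  obtain ⟨t₁, ht₁⟩ := exists_forall_ne_of_countable (S := {γ ∈ Γ | ¬(γ.1.1 = 1 ∨ γ.1.1 = -1)})
    (hΓ.mono (Set.sep_subset _ _)) (fun γ => F γ.1) (fun _ => 2)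
    (fun γ hγ => (hx γ.1 (Or.inl ⟨γ, hγ.1, rfl⟩) hγ.2 2).countable)
  obtain ⟨t₂, ht₂⟩ := exists_forall_ne_of_countable (S := {γ ∈ Γ | ¬(γ.2.1 = 1 ∨ γ.2.1 = -1)})
    (hΓ.mono (Set.sep_subset _ _)) (fun γ => F γ.2) (fun γ => F γ.1 t₁)
    (fun γ hγ => (hx γ.2 (Or.inr ⟨γ, hγ.1, rfl⟩) hγ.2 _).countable)
  refine ⟨(nMat x * aMat t₁, nMat x * aMat t₂), fun γ hγ hnc hgnorm => ?_⟩
  have hF : F γ.1 t₁ = F γ.2 t₂ := entrySqSum_eq_of_gnorm_eq hgnorm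
  by_cases h₂ : γ.2.1 = 1 ∨ γ.2.1 = -1
  · exact ht₁ γ ⟨hγ, fun h₁ => hnc ⟨h₁, h₂⟩⟩
      (hF.trans (entrySqSum_conj_of_coe_eq_one_or_neg_one _ _ h₂))
  · exact ht₂ γ ⟨hγ, h₂⟩ hF.symm
end

section
/- Let m ≥ 1 and k ≥ 0 be integers and let U := {x = (x₁,x₂,x₃,x₄) ∈ ℝ⁴ : (x₁,x₂) ≠ (0,0)}. Define F : U → ℂ by F(x) := (x₁ + i x₂)^{−(k+2m)} · (x₃ + i x₄)^k. Then F is smooth on U, F is homogeneous of degree −2m (i.e., F(cx) = c^{−2m} F(x) for all c > 0 and x ∈ U), and F is harmonic with respect to the ultrahyperbolic operator of signature (2,2): ∂²F/∂x₁² + ∂²F/∂x₂² − ∂²F/∂x₃² − ∂²F/∂x₄² = 0 on U. -/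
open Real

noncomputable def Z1 : (Fin 4 → ℝ) →L[ℝ] ℂ :=
  Complex.ofRealCLM.comp (ContinuousLinearMap.proj 0) +
    Complex.I • Complex.ofRealCLM.comp (ContinuousLinearMap.proj 1)
noncomputable def Z2 : (Fin 4 → ℝ) →L[ℝ] ℂ :=
  Complex.ofRealCLM.comp (ContinuousLinearMap.proj 2) +
    Complex.I • Complex.ofRealCLM.comp (ContinuousLinearMap.proj 3)
lemma Z1_apply (x : Fin 4 → ℝ) : Z1 x = (x 0 : ℂ) + Complex.I * (x 1 : ℂ) := by
  simp [Z1, smul_eq_mul]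
lemma Z2_apply (x : Fin 4 → ℝ) : Z2 x = (x 2 : ℂ) + Complex.I * (x 3 : ℂ) := by
  simp [Z2, smul_eq_mul]
lemma hasF (a : ℤ) (k : ℕ) {x : Fin 4 → ℝ} (hx : Z1 x ≠ 0) :
    HasFDerivAt (fun y => Z1 y ^ a * Z2 y ^ k)
      (Z1 x ^ a • (((k : ℂ) * Z2 x ^ (k-1)) • Z2) + Z2 x ^ k • (((a : ℂ) * Z1 x ^ (a-1)) • Z1)) x := by
  have h1 : HasFDerivAt (fun y => Z1 y ^ a) (((a : ℂ) * Z1 x ^ (a-1)) • (Z1 : (Fin 4 → ℝ) →L[ℝ] ℂ)) x :=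
    (hasDerivAt_zpow a (Z1 x) (Or.inl hx)).comp_hasFDerivAt x Z1.hasFDerivAt
  have h2 : HasFDerivAt (fun y => Z2 y ^ k) (((k : ℂ) * Z2 x ^ (k-1)) • (Z2 : (Fin 4 → ℝ) →L[ℝ] ℂ)) x :=
    (hasDerivAt_pow k (Z2 x)).comp_hasFDerivAt x Z2.hasFDerivAt
  exact h1.mul h2


theorem stmt13 (m k : ℕ) (hm : 1 ≤ m)
    (U : Set (Fin 4 → ℝ)) (hU : U = {x | (x 0, x 1) ≠ (0, 0)})
    (F : (Fin 4 → ℝ) → ℂ)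
    (hF : F = fun x => ((x 0 : ℂ) + Complex.I * (x 1 : ℂ)) ^ (-(k + 2 * m : ℤ)) *
      ((x 2 : ℂ) + Complex.I * (x 3 : ℂ)) ^ k) :
    ContDiffOn ℝ (⊤ : ℕ∞) F U ∧
    (∀ c : ℝ, 0 < c → ∀ x ∈ U, F (c • x) = (c : ℂ) ^ (-(2 * m : ℤ)) * F x) ∧
    (∀ x ∈ U,
      fderiv ℝ (fun y => fderiv ℝ F y (Pi.single 0 1)) x (Pi.single 0 1) +
        fderiv ℝ (fun y => fderiv ℝ F y (Pi.single 1 1)) x (Pi.single 1 1) -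
        fderiv ℝ (fun y => fderiv ℝ F y (Pi.single 2 1)) x (Pi.single 2 1) -
        fderiv ℝ (fun y => fderiv ℝ F y (Pi.single 3 1)) x (Pi.single 3 1) = 0) := by
  set a : ℤ := -(k + 2 * m : ℤ) with ha
  have hFeq : F = fun y => Z1 y ^ a * Z2 y ^ k := by
    rw [hF]; funext y; rw [Z1_apply, Z2_apply]
  have hZ : ∀ y ∈ U, Z1 y ≠ 0 := by
    intro y hy h
    rw [hU] at hy
    rw [Z1_apply] at h
    simp [Complex.ext_iff] at h
    exact hy (by simp [h.1, h.2, Prod.ext_iff])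
  refine ⟨?_, ?_, ?_⟩
  · -- smoothness
    intro x hx
    have hFeq2 : F = fun y => (Z1 y ^ (k + 2 * m : ℕ))⁻¹ * Z2 y ^ k := by
      rw [hFeq]; funext y
      rw [← zpow_natCast (Z1 y) (k + 2*m), ← zpow_neg]
      congr 2
    rw [hFeq2]
    exact (((Z1.contDiff.contDiffAt.pow _).inv
      (pow_ne_zero _ (hZ x hx))).mul (Z2.contDiff.contDiffAt.pow _)).contDiffWithinAt
  · -- homogeneity
    intro c hc x hx
    have hc0 : (c : ℂ) ≠ 0 := Complex.ofReal_ne_zero.mpr (ne_of_gt hc)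
    have e1 : Z1 (c • x) = (c : ℂ) * Z1 x := by
      rw [map_smul, Complex.real_smul]
    have e2 : Z2 (c • x) = (c : ℂ) * Z2 x := by
      rw [map_smul, Complex.real_smul]
    simp only [hFeq, e1, e2, mul_zpow, mul_pow]
    have : (c : ℂ) ^ a * (c : ℂ) ^ (k : ℕ) = (c : ℂ) ^ (-(2 * m : ℤ)) := by
      rw [← zpow_natCast ((c:ℂ)) k, ← zpow_add₀ hc0]
      congr 1
      push_cast [ha]
      ring
    rw [mul_mul_mul_comm, this]
  · -- harmonicity
    intro x hxU
    have hx : Z1 x ≠ 0 := hZ x hxU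
    have hopen : IsOpen {y : Fin 4 → ℝ | Z1 y ≠ 0} :=
      IsOpen.preimage Z1.continuous isOpen_compl_singleton
    have hmem : {y : Fin 4 → ℝ | Z1 y ≠ 0} ∈ nhds x := hopen.mem_nhds hx
    have hev : ∀ v : Fin 4 → ℝ, (fun y => fderiv ℝ F y v) =ᶠ[nhds x]
        fun y => ((k:ℂ) * Z2 v) * (Z1 y ^ a * Z2 y ^ (k-1)) +
          ((a:ℂ) * Z1 v) * (Z1 y ^ (a-1) * Z2 y ^ k) := by
      intro v
      filter_upwards [hmem] with y hy
      have hd : HasFDerivAt F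
          (Z1 y ^ a • (((k : ℂ) * Z2 y ^ (k-1)) • Z2) +
            Z2 y ^ k • (((a : ℂ) * Z1 y ^ (a-1)) • Z1)) y := by
        rw [hFeq]; exact hasF a k hy
      rw [hd.fderiv]
      simp only [ContinuousLinearMap.add_apply, ContinuousLinearMap.smul_apply, smul_eq_mul]
      ring
    have hval : ∀ v : Fin 4 → ℝ, fderiv ℝ (fun y => fderiv ℝ F y v) x v =
        ((k:ℂ) * Z2 v) * (Z1 x ^ a * (((k-1 : ℕ):ℂ) * Z2 x ^ (k-1-1) * Z2 v) +
          Z2 x ^ (k-1) * ((a:ℂ) * Z1 x ^ (a-1) * Z1 v)) +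
        ((a:ℂ) * Z1 v) * (Z1 x ^ (a-1) * ((k:ℂ) * Z2 x ^ (k-1) * Z2 v) +
          Z2 x ^ k * (((a-1:ℤ):ℂ) * Z1 x ^ (a-1-1) * Z1 v)) := by
      intro v
      rw [(hev v).fderiv_eq,
        (((hasF a (k-1) hx).const_mul ((k:ℂ) * Z2 v)).fun_add
          ((hasF (a-1) k hx).const_mul ((a:ℂ) * Z1 v))).fderiv]
      simp only [ContinuousLinearMap.add_apply, ContinuousLinearMap.smul_apply, smul_eq_mul]
    rw [hval, hval, hval, hval]
    have e0 : Z1 (Pi.single 0 1) = 1 := by simp [Z1_apply, Pi.single_apply]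
    have e1 : Z1 (Pi.single 1 1) = Complex.I := by simp [Z1_apply, Pi.single_apply]
    have e2 : Z1 (Pi.single 2 1) = 0 := by simp [Z1_apply, Pi.single_apply]
    have e3 : Z1 (Pi.single 3 1) = 0 := by simp [Z1_apply, Pi.single_apply]
    have f0 : Z2 (Pi.single 0 1) = 0 := by simp [Z2_apply, Pi.single_apply]
    have f1 : Z2 (Pi.single 1 1) = 0 := by simp [Z2_apply, Pi.single_apply]
    have f2 : Z2 (Pi.single 2 1) = 1 := by simp [Z2_apply, Pi.single_apply]
    have f3 : Z2 (Pi.single 3 1) = Complex.I := by simp [Z2_apply, Pi.single_apply]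
    rw [e0, e1, e2, e3, f0, f1, f2, f3]
    linear_combination ((a:ℂ) * ((a-1:ℤ):ℂ) * Z1 x ^ (a-1-1) * Z2 x ^ k -
      (k:ℂ) * ((k-1:ℕ):ℂ) * Z1 x ^ a * Z2 x ^ (k-1-1)) * Complex.I_sq
end

section
/- Let x ∈ SL(2,ℝ) and set s := ‖x‖ = arcosh((x₁₁²+x₁₂²+x₂₁²+x₂₂²)/2). Then |z₁(x)| = cosh(s/2) and |z₂(x)| = sinh(s/2). Consequently, for all integers m ≥ 1 and k ≥ 0, |ψ_{m,k}(x)| = (cosh(‖x‖/2))^{−2m} (tanh(‖x‖/2))^k. -/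
open Real

lemma acosh_nonneg {S : ℝ} (hS : 1 ≤ S) : 0 ≤ acosh S := by
  apply Real.log_nonneg
  have : (0:ℝ) ≤ Real.sqrt (S ^ 2 - 1) := Real.sqrt_nonneg _
  linarith

lemma cosh_acosh {S : ℝ} (hS : 1 ≤ S) : Real.cosh (acosh S) = S := by
  have h1 : (0:ℝ) ≤ S ^ 2 - 1 := by nlinarith
  have hsq := Real.sq_sqrt h1
  have hpos : 0 < S + Real.sqrt (S ^ 2 - 1) := by
    have := Real.sqrt_nonneg (S ^ 2 - 1); linarith
  rw [Real.cosh_eq, acosh, Real.exp_log hpos, Real.exp_neg, Real.exp_log hpos]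
  field_simp
  nlinarith [hsq]

theorem stmt15 (x : SL2) :
    ‖z1 x‖ = Real.cosh (gnorm x / 2) ∧
    ‖z2 x‖ = Real.sinh (gnorm x / 2) ∧
    ∀ m : ℕ, 1 ≤ m → ∀ k : ℕ,
      ‖psi m k x‖ =
        Real.cosh (gnorm x / 2) ^ (-(2 * m : ℤ)) * Real.tanh (gnorm x / 2) ^ k := by
  set a := x.1 0 0; set b := x.1 0 1; set c := x.1 1 0; set d := x.1 1 1
  have hdet : a * d - b * c = 1 := by
    have := x.2
    rwa [Matrix.det_fin_two] at this
  set S : ℝ := (a ^ 2 + b ^ 2 + c ^ 2 + d ^ 2) / 2 with hSdef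
  have hS : 1 ≤ S := by nlinarith [sq_nonneg (a - d), sq_nonneg (b + c)]
  have hcosh : Real.cosh (gnorm x) = S := cosh_acosh hS
  have hnn : 0 ≤ gnorm x := acosh_nonneg hS
  have hc2 : Real.cosh (gnorm x / 2) ^ 2 = (S + 1) / 2 := by
    have h2 := Real.cosh_two_mul (gnorm x / 2)
    have h3 := Real.cosh_sq_sub_sinh_sq (gnorm x / 2)
    rw [show 2 * (gnorm x / 2) = gnorm x by ring, hcosh] at h2
    nlinarith
  have hs2 : Real.sinh (gnorm x / 2) ^ 2 = (S - 1) / 2 := by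
    have := Real.cosh_sq (gnorm x / 2)
    linarith
  have hcpos : 0 < Real.cosh (gnorm x / 2) := Real.cosh_pos _
  have hsnn : 0 ≤ Real.sinh (gnorm x / 2) := by
    rw [← Real.sinh_zero]
    exact Real.sinh_le_sinh.mpr (by linarith)
  have h1 : ‖z1 x‖ = Real.cosh (gnorm x / 2) := by
    have : z1 x = (↑(a + d) + ↑(c - b) * Complex.I) / 2 := by
      simp only [z1]; push_cast; ring
    rw [this, norm_div, Complex.norm_add_mul_I]
    have : Real.sqrt ((a + d) ^ 2 + (c - b) ^ 2) =
        Real.sqrt ((2 * Real.cosh (gnorm x / 2)) ^ 2) := by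
      congr 1; nlinarith [hc2]
    rw [this, Real.sqrt_sq (by linarith)]
    simp
  have h2 : ‖z2 x‖ = Real.sinh (gnorm x / 2) := by
    have : z2 x = (↑(b + c) + ↑(a - d) * Complex.I) / 2 := by
      simp only [z2]; push_cast; ring
    rw [this, norm_div, Complex.norm_add_mul_I]
    have : Real.sqrt ((b + c) ^ 2 + (a - d) ^ 2) =
        Real.sqrt ((2 * Real.sinh (gnorm x / 2)) ^ 2) := by
      congr 1; nlinarith [hs2]
    rw [this, Real.sqrt_sq (by linarith)]
    simp
  refine ⟨h1, h2, fun m hm k => ?_⟩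
  have : ‖psi m k x‖ =
      Real.cosh (gnorm x / 2) ^ (-(k + 2 * m : ℤ)) * Real.sinh (gnorm x / 2) ^ k := by
    simp only [psi, norm_mul, norm_zpow, norm_pow, h1, h2]
  rw [this, Real.tanh_eq_sinh_div_cosh, div_pow]
  have hcne : Real.cosh (gnorm x / 2) ≠ 0 := ne_of_gt hcpos
  rw [show (-(k + 2 * m : ℤ)) = (-(2 * m : ℤ)) + (-(k : ℤ)) by ring,
    zpow_add₀ hcne, mul_assoc]
  congr 1
  rw [zpow_neg, zpow_natCast, inv_mul_eq_div]
end

section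
/- Let r > 0 be a real number and n ≥ 2 an integer, and define η_n > 0 by cosh η_n := 1 + 2(sinh(r/4) · sin(π/n))². Then for every j = 1, …, n−1, one has ‖a(r/8)⁻¹ · k(jπ/n) · a(r/8)‖ ≥ η_n; equivalently, the sum of the squares of the entries of the matrix a(r/8)⁻¹ k(jπ/n) a(r/8) is at least 2(1 + 2(sinh(r/4) sin(π/n))²). -/
open Real

/-! Conjugating `k(θ)` by `a(t)` rescales its off-diagonal entries by `e^{±2t}`, so half the sum
of the squared entries is `1 + 2 (sinh (2t) sin θ)²`. Since `arcosh` is monotone, it remains to see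
that `sin (jπ/n) ≥ sin (π/n)` for `1 ≤ j < n`, as `jπ/n ∈ [π/n, π - π/n]`. -/

lemma acosh_eq_arcosh : acosh = Real.arcosh := rfl

lemma aMat_add (s t : ℝ) : aMat (s + t) = aMat s * aMat t := by
  refine Subtype.ext ?_
  rw [Matrix.SpecialLinearGroup.coe_mul]
  ext i j
  fin_cases i <;> fin_cases j <;>
    simp [aMat, Matrix.mul_apply, Fin.sum_univ_two, Real.exp_add, mul_comm]

lemma aMat_zero : aMat 0 = 1 := by
  ext i j
  fin_cases i <;> fin_cases j <;> simp [aMat]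

lemma aMat_inv (t : ℝ) : (aMat t)⁻¹ = aMat (-t) :=
  inv_eq_of_mul_eq_one_right (by rw [← aMat_add, add_neg_cancel, aMat_zero])

lemma coe_aMat_inv_mul_kMat_mul_aMat (t θ : ℝ) :
    ((aMat t)⁻¹ * kMat θ * aMat t : SL2).1 =
      !![cos θ, -(exp (-(2 * t)) * sin θ); exp (2 * t) * sin θ, cos θ] := by
  rw [aMat_inv, Matrix.SpecialLinearGroup.coe_mul, Matrix.SpecialLinearGroup.coe_mul]
  ext i j
  fin_cases i <;> fin_cases j <;>
    simp [aMat, kMat, Matrix.mul_apply, Fin.sum_univ_two, two_mul, Real.exp_add, Real.exp_neg] <;>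
    field_simp

lemma gnorm_aMat_inv_mul_kMat_mul_aMat (t θ : ℝ) :
    gnorm ((aMat t)⁻¹ * kMat θ * aMat t) = acosh (1 + 2 * (sinh (2 * t) * sin θ) ^ 2) := by
  have hexp : exp (2 * t) * exp (-(2 * t)) = 1 := by rw [← Real.exp_add]; simp
  rw [gnorm, coe_aMat_inv_mul_kMat_mul_aMat, sinh_eq]
  congr 1
  simp only [Matrix.of_apply, Matrix.cons_val', Matrix.cons_val_zero, Matrix.cons_val_one,
    Matrix.empty_val', Matrix.cons_val_fin_one]
  linear_combination sin_sq_add_cos_sq θ + sin θ ^ 2 * hexp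

lemma sin_le_sin_of_mem_Icc {a x : ℝ} (ha : 0 ≤ a) (hax : a ≤ x) (hxa : x ≤ π - a) :
    sin a ≤ sin x := by
  rcases le_total x (π / 2) with hx | hx
  · exact sin_le_sin_of_le_of_le_pi_div_two (by linarith) hx hax
  · rw [← sin_pi_sub x]
    exact sin_le_sin_of_le_of_le_pi_div_two (by linarith) (by linarith) (by linarith)

lemma sin_pi_div_le_sin_mul_pi_div {n j : ℕ} (hj : 1 ≤ j) (hjn : j < n) :
    sin (π / n) ≤ sin (j * π / n) := by
  have hn : (0 : ℝ) < n := by exact_mod_cast (zero_lt_one.trans_le hj).trans hjn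
  have hj' : (1 : ℝ) ≤ j := by exact_mod_cast hj
  have hjn' : (j : ℝ) + 1 ≤ n := by exact_mod_cast hjn
  apply sin_le_sin_of_mem_Icc (by positivity)
  · rw [mul_div_assoc]
    exact le_mul_of_one_le_left (by positivity) hj'
  · rw [le_sub_iff_add_le, ← add_div, div_le_iff₀ hn]
    nlinarith [pi_pos]

theorem stmt16_general (r : ℝ) (n : ℕ) :
    ∀ j : ℕ, 1 ≤ j → j ≤ n - 1 →
      acosh (1 + 2 * (Real.sinh (r / 4) * Real.sin (Real.pi / n)) ^ 2) ≤
        gnorm ((aMat (r / 8))⁻¹ * kMat (j * Real.pi / n) * aMat (r / 8)) := by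
  intro j hj hjn
  have hsin := sin_pi_div_le_sin_mul_pi_div hj (by omega : j < n)
  have hsin_nonneg : 0 ≤ sin (π / n) := sin_nonneg_of_nonneg_of_le_pi (by positivity)
    (div_le_self pi_pos.le (by exact_mod_cast hj.trans (by omega : j ≤ n)))
  rw [gnorm_aMat_inv_mul_kMat_mul_aMat, show 2 * (r / 8) = r / 4 by ring, acosh_eq_arcosh,
    arcosh_le_arcosh (by positivity) (by positivity), mul_pow, mul_pow]
  gcongr

theorem stmt16 (r : ℝ) (hr : 0 < r) (n : ℕ) (hn : 2 ≤ n) :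
    ∀ j : ℕ, 1 ≤ j → j ≤ n - 1 →
      acosh (1 + 2 * (Real.sinh (r / 4) * Real.sin (Real.pi / n)) ^ 2) ≤
        gnorm ((aMat (r / 8))⁻¹ * kMat (j * Real.pi / n) * aMat (r / 8)) :=
  stmt16_general r n
end
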